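/- arXiv:2011.03680 — 2 statements merged into one kernel-verified Lean document; each statement's English description precedes it below -/
import Mathlib

section
/- Let (φ, ψ, θ, P) and (Γ, Ξ, Π, Ω) be two classical solutions of the thermodiffusive Bresse–Timoshenko system with Dirichlet boundary conditions, and set Λ = φ − Γ, Σ = ψ − Ξ, χ = θ − Π, M = P − Ω. Then there exist constants C, C₂ > 0, depending only on the coefficients, such that for every t ≥ 0, ∫₀ᴸ [Λ_t² + Λ_tt² + Λ_tx² + Σ_x² + (Λ_x + Σ)² + χ² + M²] dx ≤ C e^{C₂ t} Ē(0), where Ē(0) is the energy functional E evaluated at time 0 for the difference (Λ, Σ, χ, M). In particular the solution depends continuously on the initial data. -/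
open Real intervalIntegral

/-- Spatial partial derivative of a function of `(x, t)`. -/
noncomputable def pdx (f : ℝ → ℝ → ℝ) : ℝ → ℝ → ℝ := fun x t => deriv (fun y => f y t) x

/-- Temporal partial derivative of a function of `(x, t)`. -/
noncomputable def pdt (f : ℝ → ℝ → ℝ) : ℝ → ℝ → ℝ := fun x t => deriv (fun s => f x s) t

def SM (f : ℝ → ℝ → ℝ) : Prop := ContDiff ℝ (⊤ : ℕ∞) (Function.uncurry f)

-- slice smooth
lemma SM.slice_x {f : ℝ → ℝ → ℝ} (hf : SM f) (t : ℝ) : ContDiff ℝ (⊤ : ℕ∞) (fun y => f y t) :=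
  hf.comp (contDiff_id.prodMk contDiff_const)

lemma SM.slice_t {f : ℝ → ℝ → ℝ} (hf : SM f) (x : ℝ) : ContDiff ℝ (⊤ : ℕ∞) (fun s => f x s) :=
  hf.comp (contDiff_const.prodMk contDiff_id)

lemma SM.hasDerivAt_x {f : ℝ → ℝ → ℝ} (hf : SM f) (x t : ℝ) :
    HasDerivAt (fun y => f y t) (pdx f x t) x :=
  ((hf.slice_x t).differentiable (by simp) x).hasDerivAt

lemma SM.hasDerivAt_t {f : ℝ → ℝ → ℝ} (hf : SM f) (x t : ℝ) :
    HasDerivAt (fun s => f x s) (pdt f x t) t :=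
  ((hf.slice_t x).differentiable (by simp) t).hasDerivAt

-- pdx via fderiv
lemma pdx_eq_fderiv {f : ℝ → ℝ → ℝ} (hf : SM f) (x t : ℝ) :
    pdx f x t = fderiv ℝ (Function.uncurry f) (x, t) (1, 0) := by
  have h1 : HasDerivAt (fun y : ℝ => (y, t)) ((1:ℝ), (0:ℝ)) x := by
    simpa using (hasDerivAt_id x).prodMk (hasDerivAt_const x t)
  have h2 := ((hf.differentiable (by simp) (x, t)).hasFDerivAt).comp_hasDerivAt x h1
  exact h2.deriv

lemma pdt_eq_fderiv {f : ℝ → ℝ → ℝ} (hf : SM f) (x t : ℝ) :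
    pdt f x t = fderiv ℝ (Function.uncurry f) (x, t) (0, 1) := by
  have h1 : HasDerivAt (fun s : ℝ => (x, s)) ((0:ℝ), (1:ℝ)) t := by
    simpa using (hasDerivAt_const t x).prodMk (hasDerivAt_id t)
  have h2 := ((hf.differentiable (by simp) (x, t)).hasFDerivAt).comp_hasDerivAt t h1
  exact h2.deriv

lemma sm_pdx {f : ℝ → ℝ → ℝ} (hf : SM f) : SM (pdx f) := by
  have : Function.uncurry (pdx f) = fun p : ℝ × ℝ => fderiv ℝ (Function.uncurry f) p (1, 0) := by
    funext p
    exact pdx_eq_fderiv hf p.1 p.2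
  rw [SM, this]
  exact (hf.fderiv_right (by simp)).clm_apply contDiff_const

lemma sm_pdt {f : ℝ → ℝ → ℝ} (hf : SM f) : SM (pdt f) := by
  have : Function.uncurry (pdt f) = fun p : ℝ × ℝ => fderiv ℝ (Function.uncurry f) p (0, 1) := by
    funext p
    exact pdt_eq_fderiv hf p.1 p.2
  rw [SM, this]
  exact (hf.fderiv_right (by simp)).clm_apply contDiff_const

lemma pd_comm {f : ℝ → ℝ → ℝ} (hf : SM f) (x t : ℝ) :
    pdx (pdt f) x t = pdt (pdx f) x t := by
  set g := Function.uncurry f with hg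
  have hgd : ContDiff ℝ (⊤ : ℕ∞) g := hf
  have hsymm : IsSymmSndFDerivAt ℝ g (x, t) := hgd.contDiffAt.isSymmSndFDerivAt (by rw [minSmoothness_of_isRCLikeNormedField]; exact WithTop.coe_le_coe.mpr le_top)
  have hdd : DifferentiableAt ℝ (fderiv ℝ g) (x, t) :=
    ((hgd.fderiv_right (m := 1) (WithTop.coe_le_coe.mpr le_top)).differentiable one_ne_zero) (x, t)
  have e1 : pdx (pdt f) x t = fderiv ℝ (fderiv ℝ g) (x, t) (1, 0) (0, 1) := by
    rw [pdx_eq_fderiv (sm_pdt hf) x t]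
    have : Function.uncurry (pdt f) = fun p : ℝ × ℝ => fderiv ℝ g p (0, 1) := by
      funext p; exact pdt_eq_fderiv hf p.1 p.2
    rw [this, fderiv_clm_apply hdd (differentiableAt_const _)]
    simp
  have e2 : pdt (pdx f) x t = fderiv ℝ (fderiv ℝ g) (x, t) (0, 1) (1, 0) := by
    rw [pdt_eq_fderiv (sm_pdx hf) x t]
    have : Function.uncurry (pdx f) = fun p : ℝ × ℝ => fderiv ℝ g p (1, 0) := by
      funext p; exact pdx_eq_fderiv hf p.1 p.2
    rw [this, fderiv_clm_apply hdd (differentiableAt_const _)]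
    simp
  rw [e1, e2, hsymm.eq]

lemma pd_comm_fun {f : ℝ → ℝ → ℝ} (hf : SM f) : pdx (pdt f) = pdt (pdx f) :=
  funext fun x => funext fun t => pd_comm hf x t

/-- Classical solution of the thermodiffusive Bresse–Timoshenko system with
Dirichlet boundary conditions on `[0, L] × [0, ∞)`. -/
def IsSolution (L ρ1 ρ2 κ α ξ1 ξ2 c r h d : ℝ) (φ ψ θ P : ℝ → ℝ → ℝ) : Prop :=
  ContDiff ℝ (⊤ : ℕ∞) (Function.uncurry φ) ∧ ContDiff ℝ (⊤ : ℕ∞) (Function.uncurry ψ) ∧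
  ContDiff ℝ (⊤ : ℕ∞) (Function.uncurry θ) ∧ ContDiff ℝ (⊤ : ℕ∞) (Function.uncurry P) ∧
  (∀ x ∈ Set.Ioo (0:ℝ) L, ∀ t > (0:ℝ),
    ρ1 * pdt (pdt φ) x t - κ * pdx (fun y s => pdx φ y s + ψ y s) x t = 0 ∧
    -(ρ2 * pdx (pdt (pdt φ)) x t) - α * pdx (pdx ψ) x t + κ * (pdx φ x t + ψ x t)
        - ξ1 * pdx θ x t - ξ2 * pdx P x t = 0 ∧
    c * pdt θ x t + d * pdt P x t - κ * pdx (pdx θ) x t - ξ1 * pdx (pdt ψ) x t = 0 ∧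
    d * pdt θ x t + r * pdt P x t - h * pdx (pdx P) x t - ξ2 * pdx (pdt ψ) x t = 0) ∧
  (∀ t ≥ (0:ℝ),
    φ 0 t = 0 ∧ φ L t = 0 ∧ ψ 0 t = 0 ∧ ψ L t = 0 ∧
    θ 0 t = 0 ∧ θ L t = 0 ∧ P 0 t = 0 ∧ P L t = 0)

/-- The energy functional. -/
noncomputable def energy (L ρ1 ρ2 κ α c r d : ℝ) (φ ψ θ P : ℝ → ℝ → ℝ) (t : ℝ) : ℝ :=
  (1/2) * ∫ x in (0:ℝ)..L,
    (ρ1 * (pdt φ x t) ^ 2 + (ρ1 * ρ2 / κ) * (pdt (pdt φ) x t) ^ 2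
      + ρ2 * (pdx (pdt φ) x t) ^ 2 + κ * (pdx φ x t + ψ x t) ^ 2 + α * (pdx ψ x t) ^ 2
      + c * (θ x t) ^ 2 + r * (P x t) ^ 2 + 2 * d * (θ x t) * (P x t))

/-- Pointwise difference of two functions of `(x, t)`. -/
def dfn (f g : ℝ → ℝ → ℝ) : ℝ → ℝ → ℝ := fun x t => f x t - g x t

lemma sm_dfn {f g : ℝ → ℝ → ℝ} (hf : SM f) (hg : SM g) : SM (dfn f g) := by
  have : Function.uncurry (dfn f g) = Function.uncurry f - Function.uncurry g := rfl
  rw [SM, this]; exact hf.sub hg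

lemma pdx_dfn {f g : ℝ → ℝ → ℝ} (hf : SM f) (hg : SM g) :
    pdx (dfn f g) = dfn (pdx f) (pdx g) := by
  funext x t
  exact deriv_fun_sub ((hf.slice_x t).differentiable (by simp) x)
    ((hg.slice_x t).differentiable (by simp) x)

lemma pdt_dfn {f g : ℝ → ℝ → ℝ} (hf : SM f) (hg : SM g) :
    pdt (dfn f g) = dfn (pdt f) (pdt g) := by
  funext x t
  exact deriv_fun_sub ((hf.slice_t x).differentiable (by simp) t)
    ((hg.slice_t x).differentiable (by simp) t)

lemma pdx_add_fun {f g : ℝ → ℝ → ℝ} (hf : SM f) (hg : SM g) :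
    pdx (fun y s => f y s + g y s) = fun x t => pdx f x t + pdx g x t := by
  funext x t
  exact deriv_fun_add ((hf.slice_x t).differentiable (by simp) x)
    ((hg.slice_x t).differentiable (by simp) x)

lemma isSolution_dfn {L ρ1 ρ2 κ α ξ1 ξ2 c r h d : ℝ} {φ ψ θ P φ' ψ' θ' P' : ℝ → ℝ → ℝ}
    (H : IsSolution L ρ1 ρ2 κ α ξ1 ξ2 c r h d φ ψ θ P)
    (H' : IsSolution L ρ1 ρ2 κ α ξ1 ξ2 c r h d φ' ψ' θ' P') :
    IsSolution L ρ1 ρ2 κ α ξ1 ξ2 c r h d (dfn φ φ') (dfn ψ ψ') (dfn θ θ') (dfn P P') := by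
  obtain ⟨hφ, hψ, hθ, hP, heq, hbc⟩ := H
  obtain ⟨hφ', hψ', hθ', hP', heq', hbc'⟩ := H'
  refine ⟨sm_dfn hφ hφ', sm_dfn hψ hψ', sm_dfn hθ hθ', sm_dfn hP hP', ?_, ?_⟩
  · intro x hx t ht
    obtain ⟨e1, e2, e3, e4⟩ := heq x hx t ht
    obtain ⟨e1', e2', e3', e4'⟩ := heq' x hx t ht
    have r1 : pdt (pdt (dfn φ φ')) = dfn (pdt (pdt φ)) (pdt (pdt φ')) := by
      rw [pdt_dfn hφ hφ', pdt_dfn (sm_pdt hφ) (sm_pdt hφ')]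
    have r2 : (fun y s => pdx (dfn φ φ') y s + dfn ψ ψ' y s)
        = dfn (fun y s => pdx φ y s + ψ y s) (fun y s => pdx φ' y s + ψ' y s) := by
      rw [pdx_dfn hφ hφ']; funext y s; simp [dfn]; ring
    have smW : SM (fun y s => pdx φ y s + ψ y s) := by
      have : (fun y s => pdx φ y s + ψ y s) = fun y s => pdx φ y s + ψ y s := rfl
      have h1 : ContDiff ℝ (⊤ : ℕ∞) (Function.uncurry (fun y s => pdx φ y s + ψ y s)) := by
        have : Function.uncurry (fun y s => pdx φ y s + ψ y s)
            = fun p => Function.uncurry (pdx φ) p + Function.uncurry ψ p := rfl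
        rw [this]; exact (sm_pdx hφ).add hψ
      exact h1
    have smW' : SM (fun y s => pdx φ' y s + ψ' y s) := by
      have h1 : ContDiff ℝ (⊤ : ℕ∞) (Function.uncurry (fun y s => pdx φ' y s + ψ' y s)) := by
        have : Function.uncurry (fun y s => pdx φ' y s + ψ' y s)
            = fun p => Function.uncurry (pdx φ') p + Function.uncurry ψ' p := rfl
        rw [this]; exact (sm_pdx hφ').add hψ'
      exact h1
    have r3 : pdx (fun y s => pdx (dfn φ φ') y s + dfn ψ ψ' y s)
        = dfn (pdx (fun y s => pdx φ y s + ψ y s)) (pdx (fun y s => pdx φ' y s + ψ' y s)) := by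
      rw [r2, pdx_dfn smW smW']
    have r4 : pdx (pdt (pdt (dfn φ φ'))) = dfn (pdx (pdt (pdt φ))) (pdx (pdt (pdt φ'))) := by
      rw [r1, pdx_dfn (sm_pdt (sm_pdt hφ)) (sm_pdt (sm_pdt hφ'))]
    have r5 : pdx (pdx (dfn ψ ψ')) = dfn (pdx (pdx ψ)) (pdx (pdx ψ')) := by
      rw [pdx_dfn hψ hψ', pdx_dfn (sm_pdx hψ) (sm_pdx hψ')]
    have r6 : pdx (dfn φ φ') = dfn (pdx φ) (pdx φ') := pdx_dfn hφ hφ'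
    have r7 : pdx (dfn θ θ') = dfn (pdx θ) (pdx θ') := pdx_dfn hθ hθ'
    have r8 : pdx (dfn P P') = dfn (pdx P) (pdx P') := pdx_dfn hP hP'
    have r9 : pdt (dfn θ θ') = dfn (pdt θ) (pdt θ') := pdt_dfn hθ hθ'
    have r10 : pdt (dfn P P') = dfn (pdt P) (pdt P') := pdt_dfn hP hP'
    have r11 : pdx (pdx (dfn θ θ')) = dfn (pdx (pdx θ)) (pdx (pdx θ')) := by
      rw [r7, pdx_dfn (sm_pdx hθ) (sm_pdx hθ')]
    have r12 : pdx (pdt (dfn ψ ψ')) = dfn (pdx (pdt ψ)) (pdx (pdt ψ')) := by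
      rw [pdt_dfn hψ hψ', pdx_dfn (sm_pdt hψ) (sm_pdt hψ')]
    have r13 : pdx (pdx (dfn P P')) = dfn (pdx (pdx P)) (pdx (pdx P')) := by
      rw [r8, pdx_dfn (sm_pdx hP) (sm_pdx hP')]
    refine ⟨?_, ?_, ?_, ?_⟩
    · rw [r1, r3]; simp only [dfn]; linarith
    · rw [r4, r5, r6, r7, r8]; simp only [dfn]; linarith
    · rw [r9, r10, r11, r12]; simp only [dfn]; linarith
    · rw [r9, r10, r13, r12]; simp only [dfn]; linarith
  · intro t ht
    obtain ⟨b1, b2, b3, b4, b5, b6, b7, b8⟩ := hbc t ht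
    obtain ⟨b1', b2', b3', b4', b5', b6', b7', b8'⟩ := hbc' t ht
    simp [dfn, b1, b2, b3, b4, b5, b6, b7, b8, b1', b2', b3', b4', b5', b6', b7', b8']
noncomputable def Fi (ρ1 ρ2 κ α c r d : ℝ) (φ ψ θ P : ℝ → ℝ → ℝ) (x t : ℝ) : ℝ :=
  ρ1 * (pdt φ x t) ^ 2 + (ρ1 * ρ2 / κ) * (pdt (pdt φ) x t) ^ 2
    + ρ2 * (pdx (pdt φ) x t) ^ 2 + κ * (pdx φ x t + ψ x t) ^ 2 + α * (pdx ψ x t) ^ 2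
    + c * (θ x t) ^ 2 + r * (P x t) ^ 2 + 2 * d * (θ x t) * (P x t)

lemma energy_eq (L ρ1 ρ2 κ α c r d : ℝ) (φ ψ θ P : ℝ → ℝ → ℝ) (t : ℝ) :
    energy L ρ1 ρ2 κ α c r d φ ψ θ P t
      = (1/2) * ∫ x in (0:ℝ)..L, Fi ρ1 ρ2 κ α c r d φ ψ θ P x t := rfl

noncomputable def Df (ρ1 ρ2 κ α c r d : ℝ) (φ ψ θ P : ℝ → ℝ → ℝ) (x t : ℝ) : ℝ :=
  2*ρ1*(pdt φ x t)*(pdt (pdt φ) x t)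
    + 2*(ρ1*ρ2/κ)*(pdt (pdt φ) x t)*(pdt (pdt (pdt φ)) x t)
    + 2*ρ2*(pdx (pdt φ) x t)*(pdt (pdx (pdt φ)) x t)
    + 2*κ*(pdx φ x t + ψ x t)*(pdt (pdx φ) x t + pdt ψ x t)
    + 2*α*(pdx ψ x t)*(pdt (pdx ψ) x t)
    + 2*c*(θ x t)*(pdt θ x t) + 2*r*(P x t)*(pdt P x t)
    + 2*d*(pdt θ x t * P x t + θ x t * pdt P x t)

noncomputable def Gf (ρ2 κ α h ξ1 ξ2 : ℝ) (φ ψ θ P : ℝ → ℝ → ℝ) (x t : ℝ) : ℝ :=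
  κ*(pdt φ x t)*(pdx φ x t + ψ x t) + ρ2*(pdt (pdt φ) x t)*(pdx (pdt φ) x t)
    + ρ2*(pdt (pdt φ) x t)*(pdt ψ x t) + α*(pdt ψ x t)*(pdx ψ x t)
    + ξ1*(pdt ψ x t)*(θ x t) + ξ2*(pdt ψ x t)*(P x t)
    + κ*(θ x t)*(pdx θ x t) + h*(P x t)*(pdx P x t)

noncomputable def DGf (ρ2 κ α h ξ1 ξ2 : ℝ) (φ ψ θ P : ℝ → ℝ → ℝ) (x t : ℝ) : ℝ :=
  κ*((pdx (pdt φ) x t)*(pdx φ x t + ψ x t) + (pdt φ x t)*(pdx (pdx φ) x t + pdx ψ x t))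
    + ρ2*((pdx (pdt (pdt φ)) x t)*(pdx (pdt φ) x t) + (pdt (pdt φ) x t)*(pdx (pdx (pdt φ)) x t))
    + ρ2*((pdx (pdt (pdt φ)) x t)*(pdt ψ x t) + (pdt (pdt φ) x t)*(pdx (pdt ψ) x t))
    + α*((pdx (pdt ψ) x t)*(pdx ψ x t) + (pdt ψ x t)*(pdx (pdx ψ) x t))
    + ξ1*((pdx (pdt ψ) x t)*(θ x t) + (pdt ψ x t)*(pdx θ x t))
    + ξ2*((pdx (pdt ψ) x t)*(P x t) + (pdt ψ x t)*(pdx P x t))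
    + κ*((pdx θ x t)^2 + (θ x t)*(pdx (pdx θ) x t))
    + h*((pdx P x t)^2 + (P x t)*(pdx (pdx P) x t))

section deriv_lemmas
variable {φ ψ θ P : ℝ → ℝ → ℝ} (hφ : SM φ) (hψ : SM ψ) (hθ : SM θ) (hP : SM P)
  (ρ1 ρ2 κ α c r d h ξ1 ξ2 : ℝ)

include hφ hψ hθ hP

lemma hasDerivAt_Fi (x t : ℝ) :
    HasDerivAt (fun s => Fi ρ1 ρ2 κ α c r d φ ψ θ P x s)
      (Df ρ1 ρ2 κ α c r d φ ψ θ P x t) t := by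
  have h1 := (sm_pdt hφ).hasDerivAt_t x t
  have h2 := (sm_pdt (sm_pdt hφ)).hasDerivAt_t x t
  have h3 := (sm_pdx (sm_pdt hφ)).hasDerivAt_t x t
  have h4 := (sm_pdx hφ).hasDerivAt_t x t
  have h5 := hψ.hasDerivAt_t x t
  have h6 := (sm_pdx hψ).hasDerivAt_t x t
  have h7 := hθ.hasDerivAt_t x t
  have h8 := hP.hasDerivAt_t x t
  have H := ((((((((h1.pow 2).const_mul ρ1).add
    ((h2.pow 2).const_mul (ρ1 * ρ2 / κ))).add
    ((h3.pow 2).const_mul ρ2)).add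
    (((h4.add h5).pow 2).const_mul κ)).add
    ((h6.pow 2).const_mul α)).add
    ((h7.pow 2).const_mul c)).add
    ((h8.pow 2).const_mul r)).add
    (((h7.const_mul (2*d)).mul h8))
  refine H.congr_deriv ?_
  simp only [Df, Pi.add_apply]; push_cast; ring

lemma hasDerivAt_Gf (x t : ℝ) :
    HasDerivAt (fun y => Gf ρ2 κ α h ξ1 ξ2 φ ψ θ P y t)
      (DGf ρ2 κ α h ξ1 ξ2 φ ψ θ P x t) x := by
  have g1 := (sm_pdt hφ).hasDerivAt_x x t
  have g2 := (sm_pdx hφ).hasDerivAt_x x t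
  have g3 := hψ.hasDerivAt_x x t
  have g4 := (sm_pdt (sm_pdt hφ)).hasDerivAt_x x t
  have g5 := (sm_pdx (sm_pdt hφ)).hasDerivAt_x x t
  have g6 := (sm_pdt hψ).hasDerivAt_x x t
  have g7 := (sm_pdx hψ).hasDerivAt_x x t
  have g8 := hθ.hasDerivAt_x x t
  have g9 := (sm_pdx hθ).hasDerivAt_x x t
  have g10 := hP.hasDerivAt_x x t
  have g11 := (sm_pdx hP).hasDerivAt_x x t
  have A1 := (g1.const_mul κ).mul (g2.add g3)
  have A2 := A1.add ((g4.const_mul ρ2).mul g5)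
  have A3 := A2.add ((g4.const_mul ρ2).mul g6)
  have A4 := A3.add ((g6.const_mul α).mul g7)
  have A5 := A4.add ((g6.const_mul ξ1).mul g8)
  have A6 := A5.add ((g6.const_mul ξ2).mul g10)
  have A7 := A6.add ((g8.const_mul κ).mul g9)
  have H := A7.add ((g10.const_mul h).mul g11)
  refine H.congr_deriv ?_
  simp only [DGf, Pi.add_apply]; ring

end deriv_lemmas

section cont_lemmas
variable {φ ψ θ P : ℝ → ℝ → ℝ} (hφ : SM φ) (hψ : SM ψ) (hθ : SM θ) (hP : SM P)
  (ρ1 ρ2 κ α c r d h ξ1 ξ2 : ℝ)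

include hφ hψ hθ hP

lemma contFi : Continuous (Function.uncurry (Fi ρ1 ρ2 κ α c r d φ ψ θ P)) := by
  have c1 : Continuous fun p : ℝ × ℝ => pdt φ p.1 p.2 := (sm_pdt hφ).continuous
  have c2 : Continuous fun p : ℝ × ℝ => pdt (pdt φ) p.1 p.2 := (sm_pdt (sm_pdt hφ)).continuous
  have c3 : Continuous fun p : ℝ × ℝ => pdx (pdt φ) p.1 p.2 := (sm_pdx (sm_pdt hφ)).continuous
  have c4 : Continuous fun p : ℝ × ℝ => pdx φ p.1 p.2 := (sm_pdx hφ).continuous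
  have c5 : Continuous fun p : ℝ × ℝ => ψ p.1 p.2 := hψ.continuous
  have c6 : Continuous fun p : ℝ × ℝ => pdx ψ p.1 p.2 := (sm_pdx hψ).continuous
  have c7 : Continuous fun p : ℝ × ℝ => θ p.1 p.2 := hθ.continuous
  have c8 : Continuous fun p : ℝ × ℝ => P p.1 p.2 := hP.continuous
  show Continuous fun p : ℝ × ℝ => Fi ρ1 ρ2 κ α c r d φ ψ θ P p.1 p.2
  simp only [Fi]
  fun_prop

lemma contDf : Continuous (Function.uncurry (Df ρ1 ρ2 κ α c r d φ ψ θ P)) := by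
  have c1 : Continuous fun p : ℝ × ℝ => pdt φ p.1 p.2 := (sm_pdt hφ).continuous
  have c2 : Continuous fun p : ℝ × ℝ => pdt (pdt φ) p.1 p.2 := (sm_pdt (sm_pdt hφ)).continuous
  have c2' : Continuous fun p : ℝ × ℝ => pdt (pdt (pdt φ)) p.1 p.2 :=
    (sm_pdt (sm_pdt (sm_pdt hφ))).continuous
  have c3 : Continuous fun p : ℝ × ℝ => pdx (pdt φ) p.1 p.2 := (sm_pdx (sm_pdt hφ)).continuous
  have c3' : Continuous fun p : ℝ × ℝ => pdt (pdx (pdt φ)) p.1 p.2 :=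
    (sm_pdt (sm_pdx (sm_pdt hφ))).continuous
  have c4 : Continuous fun p : ℝ × ℝ => pdx φ p.1 p.2 := (sm_pdx hφ).continuous
  have c4' : Continuous fun p : ℝ × ℝ => pdt (pdx φ) p.1 p.2 := (sm_pdt (sm_pdx hφ)).continuous
  have c5 : Continuous fun p : ℝ × ℝ => ψ p.1 p.2 := hψ.continuous
  have c5' : Continuous fun p : ℝ × ℝ => pdt ψ p.1 p.2 := (sm_pdt hψ).continuous
  have c6 : Continuous fun p : ℝ × ℝ => pdx ψ p.1 p.2 := (sm_pdx hψ).continuous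
  have c6' : Continuous fun p : ℝ × ℝ => pdt (pdx ψ) p.1 p.2 := (sm_pdt (sm_pdx hψ)).continuous
  have c7 : Continuous fun p : ℝ × ℝ => θ p.1 p.2 := hθ.continuous
  have c7' : Continuous fun p : ℝ × ℝ => pdt θ p.1 p.2 := (sm_pdt hθ).continuous
  have c8 : Continuous fun p : ℝ × ℝ => P p.1 p.2 := hP.continuous
  have c8' : Continuous fun p : ℝ × ℝ => pdt P p.1 p.2 := (sm_pdt hP).continuous
  show Continuous fun p : ℝ × ℝ => Df ρ1 ρ2 κ α c r d φ ψ θ P p.1 p.2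
  simp only [Df]
  fun_prop

lemma contDGf : Continuous (Function.uncurry (DGf ρ2 κ α h ξ1 ξ2 φ ψ θ P)) := by
  have c1 : Continuous fun p : ℝ × ℝ => pdt φ p.1 p.2 := (sm_pdt hφ).continuous
  have c2 : Continuous fun p : ℝ × ℝ => pdt (pdt φ) p.1 p.2 := (sm_pdt (sm_pdt hφ)).continuous
  have c3 : Continuous fun p : ℝ × ℝ => pdx (pdt φ) p.1 p.2 := (sm_pdx (sm_pdt hφ)).continuous
  have c3' : Continuous fun p : ℝ × ℝ => pdx (pdx (pdt φ)) p.1 p.2 :=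
    (sm_pdx (sm_pdx (sm_pdt hφ))).continuous
  have c3'' : Continuous fun p : ℝ × ℝ => pdx (pdt (pdt φ)) p.1 p.2 :=
    (sm_pdx (sm_pdt (sm_pdt hφ))).continuous
  have c4 : Continuous fun p : ℝ × ℝ => pdx φ p.1 p.2 := (sm_pdx hφ).continuous
  have c4' : Continuous fun p : ℝ × ℝ => pdx (pdx φ) p.1 p.2 := (sm_pdx (sm_pdx hφ)).continuous
  have c5 : Continuous fun p : ℝ × ℝ => ψ p.1 p.2 := hψ.continuous
  have c5' : Continuous fun p : ℝ × ℝ => pdt ψ p.1 p.2 := (sm_pdt hψ).continuous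
  have c6 : Continuous fun p : ℝ × ℝ => pdx ψ p.1 p.2 := (sm_pdx hψ).continuous
  have c6' : Continuous fun p : ℝ × ℝ => pdx (pdx ψ) p.1 p.2 := (sm_pdx (sm_pdx hψ)).continuous
  have c6'' : Continuous fun p : ℝ × ℝ => pdx (pdt ψ) p.1 p.2 := (sm_pdx (sm_pdt hψ)).continuous
  have c7 : Continuous fun p : ℝ × ℝ => θ p.1 p.2 := hθ.continuous
  have c7' : Continuous fun p : ℝ × ℝ => pdx θ p.1 p.2 := (sm_pdx hθ).continuous
  have c7'' : Continuous fun p : ℝ × ℝ => pdx (pdx θ) p.1 p.2 := (sm_pdx (sm_pdx hθ)).continuous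
  have c8 : Continuous fun p : ℝ × ℝ => P p.1 p.2 := hP.continuous
  have c8' : Continuous fun p : ℝ × ℝ => pdx P p.1 p.2 := (sm_pdx hP).continuous
  have c8'' : Continuous fun p : ℝ × ℝ => pdx (pdx P) p.1 p.2 := (sm_pdx (sm_pdx hP)).continuous
  show Continuous fun p : ℝ × ℝ => DGf ρ2 κ α h ξ1 ξ2 φ ψ θ P p.1 p.2
  simp only [DGf]
  fun_prop

end cont_lemmas

lemma cont_slice {F : ℝ → ℝ → ℝ} (hF : Continuous (Function.uncurry F)) (t : ℝ) :
    Continuous (fun x => F x t) :=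
  hF.comp (continuous_id.prodMk continuous_const)

lemma hasDerivAt_energy {φ ψ θ P : ℝ → ℝ → ℝ} (hφ : SM φ) (hψ : SM ψ) (hθ : SM θ) (hP : SM P)
    (L ρ1 ρ2 κ α c r d : ℝ) (t₀ : ℝ) :
    HasDerivAt (fun t => energy L ρ1 ρ2 κ α c r d φ ψ θ P t)
      ((1/2) * ∫ x in (0:ℝ)..L, Df ρ1 ρ2 κ α c r d φ ψ θ P x t₀) t₀ := by
  have cFi := contFi hφ hψ hθ hP ρ1 ρ2 κ α c r d
  have cDf := contDf hφ hψ hθ hP ρ1 ρ2 κ α c r d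
  -- compact bound for Df
  have hK : IsCompact ((Set.uIcc (0:ℝ) L) ×ˢ (Set.Icc (t₀-1) (t₀+1))) :=
    isCompact_uIcc.prod isCompact_Icc
  obtain ⟨C, hC⟩ := hK.exists_bound_of_continuousOn cDf.continuousOn
  have key := intervalIntegral.hasDerivAt_integral_of_dominated_loc_of_deriv_le
    (F := fun t x => Fi ρ1 ρ2 κ α c r d φ ψ θ P x t)
    (F' := fun t x => Df ρ1 ρ2 κ α c r d φ ψ θ P x t)
    (x₀ := t₀) (a := (0:ℝ)) (b := L) (μ := MeasureTheory.volume)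
    (bound := fun _ => C) (s := Metric.ball t₀ 1) (Metric.ball_mem_nhds t₀ one_pos)
    (Filter.Eventually.of_forall fun t =>
      ((cont_slice cFi t).aestronglyMeasurable))
    ((cont_slice cFi t₀).intervalIntegrable 0 L)
    ((cont_slice cDf t₀).aestronglyMeasurable)
    (Filter.Eventually.of_forall fun x hx => by
      intro t ht
      have hxI : x ∈ Set.uIcc (0:ℝ) L := Set.uIoc_subset_uIcc hx
      have htI : t ∈ Set.Icc (t₀-1) (t₀+1) := by
        rw [Metric.mem_ball, Real.dist_eq] at ht
        constructor <;> [linarith [abs_lt.mp ht]; linarith [abs_lt.mp ht]]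
      exact hC ((x, t) : ℝ × ℝ) ⟨hxI, htI⟩)
    (intervalIntegrable_const)
    (Filter.Eventually.of_forall fun x _ t _ =>
      hasDerivAt_Fi hφ hψ hθ hP ρ1 ρ2 κ α c r d x t)
  have h2 := key.2
  have : (fun t => energy L ρ1 ρ2 κ α c r d φ ψ θ P t)
      = fun t => (1/2) * ∫ x in (0:ℝ)..L, Fi ρ1 ρ2 κ α c r d φ ψ θ P x t := by
    funext t; exact energy_eq L ρ1 ρ2 κ α c r d φ ψ θ P t
  rw [this]
  exact h2.const_mul (1/2)

lemma deriv_zero_on_Ioi {g : ℝ → ℝ} (hg : ∀ s > (0:ℝ), g s = 0) {t : ℝ} (ht : 0 < t) :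
    deriv g t = 0 := by
  have hev : g =ᶠ[nhds t] fun _ => 0 := by
    filter_upwards [isOpen_Ioi.mem_nhds ht] with s hs using hg s hs
  rw [hev.deriv_eq, deriv_const]

lemma deriv_energy_nonpos {L ρ1 ρ2 κ α ξ1 ξ2 c r h d : ℝ} {φ ψ θ P : ℝ → ℝ → ℝ}
    (S : IsSolution L ρ1 ρ2 κ α ξ1 ξ2 c r h d φ ψ θ P)
    (hL : 0 < L) (hκ : 0 < κ) (hh : 0 < h) {t : ℝ} (ht : 0 < t) :
    deriv (fun t => energy L ρ1 ρ2 κ α c r d φ ψ θ P t) t ≤ 0 := by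
  obtain ⟨hφ, hψ, hθ, hP, heq, hbc⟩ := S
  have hDE := hasDerivAt_energy hφ hψ hθ hP L ρ1 ρ2 κ α c r d t
  rw [hDE.deriv]
  -- pointwise identity on the interior
  have hpt : ∀ x ∈ Set.Ioo (0:ℝ) L,
      Df ρ1 ρ2 κ α c r d φ ψ θ P x t
        = 2 * DGf ρ2 κ α h ξ1 ξ2 φ ψ θ P x t
          - (2*κ*(pdx θ x t)^2 + 2*h*(pdx P x t)^2) := by
    intro x hx
    obtain ⟨e1, e2, e3, e4⟩ := heq x hx t ht
    have hWx : ∀ x' t', pdx (fun y s => pdx φ y s + ψ y s) x' t'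
        = pdx (pdx φ) x' t' + pdx ψ x' t' := fun x' t' =>
      congrFun (congrFun (pdx_add_fun (sm_pdx hφ) hψ) x') t'
    have e1f : ∀ s > (0:ℝ), ρ1 * pdt (pdt φ) x s = κ * (pdx (pdx φ) x s + pdx ψ x s) := by
      intro s hs
      have := (heq x hx s hs).1
      rw [hWx] at this; linarith
    have e1' := e1f t ht
    -- differentiate equation 1 in time
    have e1t : ρ1 * pdt (pdt (pdt φ)) x t
        = κ * (pdx (pdx (pdt φ)) x t + pdx (pdt ψ) x t) := by
      have hev : (fun s => ρ1 * pdt (pdt φ) x s)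
          =ᶠ[nhds t] fun s => κ * (pdx (pdx φ) x s + pdx ψ x s) := by
        filter_upwards [isOpen_Ioi.mem_nhds ht] with s hs using e1f s hs
      have hder := hev.deriv_eq
      have hL' : deriv (fun s => ρ1 * pdt (pdt φ) x s) t = ρ1 * pdt (pdt (pdt φ)) x t :=
        (((sm_pdt (sm_pdt hφ)).hasDerivAt_t x t).const_mul ρ1).deriv
      have hR' : deriv (fun s => κ * (pdx (pdx φ) x s + pdx ψ x s)) t
          = κ * (pdt (pdx (pdx φ)) x t + pdt (pdx ψ) x t) :=
        ((((sm_pdx (sm_pdx hφ)).hasDerivAt_t x t).add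
          ((sm_pdx hψ).hasDerivAt_t x t)).const_mul κ).deriv
      rw [hL', hR'] at hder
      rw [hder, ← pd_comm (sm_pdx hφ) x t, ← pd_comm_fun hφ, ← pd_comm hψ x t]
    have key : (ρ1 * ρ2 / κ) * pdt (pdt (pdt φ)) x t
        = ρ2 * (pdx (pdx (pdt φ)) x t + pdx (pdt ψ) x t) := by
      field_simp
      linear_combination ρ2 * e1t
    simp only [Df, DGf]
    rw [← pd_comm (sm_pdt hφ) x t, ← pd_comm hφ x t, ← pd_comm hψ x t]
    linear_combination 2 * pdt φ x t * e1' + 2 * pdt (pdt φ) x t * key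
      + 2 * pdt ψ x t * e2 + 2 * θ x t * e3 + 2 * P x t * e4
  -- boundary values vanish
  have bd : ∀ a : ℝ, (∀ s ≥ (0:ℝ), φ a s = 0 ∧ ψ a s = 0 ∧ θ a s = 0 ∧ P a s = 0) →
      Gf ρ2 κ α h ξ1 ξ2 φ ψ θ P a t = 0 := by
    intro a hb
    have b1 : pdt φ a t = 0 := deriv_zero_on_Ioi (fun s hs => (hb s hs.le).1) ht
    have b2 : pdt (pdt φ) a t = 0 :=
      deriv_zero_on_Ioi (fun s hs => deriv_zero_on_Ioi (fun s' hs' => (hb s' hs'.le).1) hs) ht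
    have b3 : pdt ψ a t = 0 := deriv_zero_on_Ioi (fun s hs => (hb s hs.le).2.1) ht
    have b4 : θ a t = 0 := (hb t ht.le).2.2.1
    have b5 : P a t = 0 := (hb t ht.le).2.2.2
    simp [Gf, b1, b2, b3, b4, b5]
  have hG0 : Gf ρ2 κ α h ξ1 ξ2 φ ψ θ P 0 t = 0 := by
    apply bd 0
    intro s hs
    obtain ⟨c1, _, c3, _, c5, _, c7, _⟩ := hbc s hs
    exact ⟨c1, c3, c5, c7⟩
  have hGL : Gf ρ2 κ α h ξ1 ξ2 φ ψ θ P L t = 0 := by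
    apply bd L
    intro s hs
    obtain ⟨_, c2, _, c4, _, c6, _, c8⟩ := hbc s hs
    exact ⟨c2, c4, c6, c8⟩
  -- integrate
  have hDGint : IntervalIntegrable (fun y => DGf ρ2 κ α h ξ1 ξ2 φ ψ θ P y t)
      MeasureTheory.volume 0 L :=
    (cont_slice (contDGf hφ hψ hθ hP ρ2 κ α h ξ1 ξ2) t).intervalIntegrable 0 L
  have hDG : ∫ x in (0:ℝ)..L, DGf ρ2 κ α h ξ1 ξ2 φ ψ θ P x t = 0 := by
    rw [intervalIntegral.integral_eq_sub_of_hasDerivAt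
      (fun y _ => hasDerivAt_Gf hφ hψ hθ hP ρ2 κ α h ξ1 ξ2 y t) hDGint, hGL, hG0, sub_zero]
  have cθx : Continuous fun y : ℝ => pdx θ y t := by
    have := (sm_pdx hθ).continuous
    exact cont_slice this t
  have cPx : Continuous fun y : ℝ => pdx P y t := by
    have := (sm_pdx hP).continuous
    exact cont_slice this t
  have hlow : IntervalIntegrable (fun x => 2*κ*(pdx θ x t)^2 + 2*h*(pdx P x t)^2)
      MeasureTheory.volume 0 L := by
    exact ((continuous_const.mul (cθx.pow 2)).add
      (continuous_const.mul (cPx.pow 2))).intervalIntegrable 0 L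
  have hcongr : ∫ x in (0:ℝ)..L, Df ρ1 ρ2 κ α c r d φ ψ θ P x t
      = ∫ x in (0:ℝ)..L, (2 * DGf ρ2 κ α h ξ1 ξ2 φ ψ θ P x t
          - (2*κ*(pdx θ x t)^2 + 2*h*(pdx P x t)^2)) := by
    apply intervalIntegral.integral_congr_ae
    have hae : ∀ᵐ (x : ℝ) ∂MeasureTheory.volume, x ≠ L := by
      have h0 : MeasureTheory.volume ({L} : Set ℝ) = 0 := Real.volume_singleton
      have := (MeasureTheory.measure_eq_zero_iff_ae_notMem (μ := MeasureTheory.volume)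
        (s := ({L} : Set ℝ))).mp h0
      filter_upwards [this] with x hx
      simpa using hx
    filter_upwards [hae] with x hxL hxI
    rw [Set.uIoc_of_le hL.le] at hxI
    exact hpt x ⟨hxI.1, lt_of_le_of_ne hxI.2 hxL⟩
  have hnn : 0 ≤ ∫ x in (0:ℝ)..L, (2*κ*(pdx θ x t)^2 + 2*h*(pdx P x t)^2) := by
    apply intervalIntegral.integral_nonneg hL.le
    intro u _
    have := sq_nonneg (pdx θ u t)
    have := sq_nonneg (pdx P u t)
    nlinarith
  rw [hcongr, intervalIntegral.integral_sub ((hDGint.const_mul 2)) hlow,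
    intervalIntegral.integral_const_mul, hDG]
  nlinarith

lemma energy_le {L ρ1 ρ2 κ α ξ1 ξ2 c r h d : ℝ} {φ ψ θ P : ℝ → ℝ → ℝ}
    (S : IsSolution L ρ1 ρ2 κ α ξ1 ξ2 c r h d φ ψ θ P)
    (hL : 0 < L) (hκ : 0 < κ) (hh : 0 < h) {t : ℝ} (ht : 0 ≤ t) :
    energy L ρ1 ρ2 κ α c r d φ ψ θ P t ≤ energy L ρ1 ρ2 κ α c r d φ ψ θ P 0 := by
  obtain ⟨hφ, hψ, hθ, hP, heq, hbc⟩ := S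
  have hdiff : Differentiable ℝ (fun t => energy L ρ1 ρ2 κ α c r d φ ψ θ P t) :=
    fun s => (hasDerivAt_energy hφ hψ hθ hP L ρ1 ρ2 κ α c r d s).differentiableAt
  have hanti : AntitoneOn (fun t => energy L ρ1 ρ2 κ α c r d φ ψ θ P t) (Set.Ici 0) := by
    apply antitoneOn_of_deriv_nonpos (convex_Ici 0) hdiff.continuous.continuousOn
      (hdiff.differentiableOn)
    intro s hs
    rw [interior_Ici] at hs
    exact deriv_energy_nonpos ⟨hφ, hψ, hθ, hP, heq, hbc⟩ hL hκ hh hs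
  exact hanti (Set.self_mem_Ici) ht ht

lemma quad_nonneg {c r d : ℝ} (hc : 0 < c) (hcrd : 0 < c*r - d^2) (u m : ℝ) :
    0 ≤ c*u^2 + r*m^2 + 2*d*u*m := by
  nlinarith [sq_nonneg (c*u + d*m), sq_nonneg m, mul_nonneg hcrd.le (sq_nonneg m)]

lemma quad_lower {c r d : ℝ} (hc : 0 < c) (hr : 0 < r) (hcrd : 0 < c*r - d^2) (u m : ℝ) :
    ((c*r - d^2)/(c+r))*(u^2 + m^2) ≤ c*u^2 + r*m^2 + 2*d*u*m := by
  have hcr : 0 < c + r := by linarith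
  set ε := (c*r - d^2)/(c+r) with hε
  have hεpos : 0 < ε := div_pos hcrd hcr
  have hεc : ε < c := by
    rw [hε, div_lt_iff₀ hcr]
    nlinarith [sq_nonneg d, mul_pos hc hc]
  have hid : (c-ε)*(r-ε) - d^2 = ε^2 := by
    rw [hε]; field_simp; ring
  nlinarith [sq_nonneg ((c-ε)*u + d*m), sq_nonneg m, hεc, hid,
    mul_nonneg (sub_pos.mpr hεc).le (sq_nonneg m)]

lemma Fi_nonneg {ρ1 ρ2 κ α c r d : ℝ} (hρ1 : 0 < ρ1) (hρ2 : 0 < ρ2) (hκ : 0 < κ)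
    (hα : 0 < α) (hc : 0 < c) (hcrd : 0 < c*r - d^2) (φ ψ θ P : ℝ → ℝ → ℝ) (x t : ℝ) :
    0 ≤ Fi ρ1 ρ2 κ α c r d φ ψ θ P x t := by
  have hq := quad_nonneg hc hcrd (θ x t) (P x t)
  have h1 : (0:ℝ) ≤ ρ1 * ρ2 / κ := by positivity
  simp only [Fi]
  nlinarith [sq_nonneg (pdt φ x t), sq_nonneg (pdt (pdt φ) x t), sq_nonneg (pdx (pdt φ) x t),
    sq_nonneg (pdx φ x t + ψ x t), sq_nonneg (pdx ψ x t),
    mul_nonneg h1 (sq_nonneg (pdt (pdt φ) x t))]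

lemma energy_nonneg {L ρ1 ρ2 κ α c r d : ℝ} (hL : 0 < L) (hρ1 : 0 < ρ1) (hρ2 : 0 < ρ2)
    (hκ : 0 < κ) (hα : 0 < α) (hc : 0 < c) (hcrd : 0 < c*r - d^2)
    (φ ψ θ P : ℝ → ℝ → ℝ) (t : ℝ) :
    0 ≤ energy L ρ1 ρ2 κ α c r d φ ψ θ P t := by
  rw [energy_eq]
  have : 0 ≤ ∫ x in (0:ℝ)..L, Fi ρ1 ρ2 κ α c r d φ ψ θ P x t :=
    intervalIntegral.integral_nonneg hL.le
      (fun u _ => Fi_nonneg hρ1 hρ2 hκ hα hc hcrd φ ψ θ P u t)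
  linarith

set_option maxHeartbeats 1000000 in
/-- Continuous dependence on initial data: the difference of two solutions is
controlled, in the natural norm, by its initial energy times an exponential. -/
theorem continuous_dependence (L ρ1 ρ2 κ α ξ1 ξ2 c r h d : ℝ)
    (hL : 0 < L) (hρ1 : 0 < ρ1) (hρ2 : 0 < ρ2) (hκ : 0 < κ) (hα : 0 < α)
    (hξ1 : 0 < ξ1) (hξ2 : 0 < ξ2) (hc : 0 < c) (hr : 0 < r) (hh : 0 < h)
    (hcrd : c * r - d ^ 2 > 0) :
    ∃ C > (0:ℝ), ∃ C₂ > (0:ℝ), ∀ φ ψ θ P φ' ψ' θ' P' : ℝ → ℝ → ℝ,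
      IsSolution L ρ1 ρ2 κ α ξ1 ξ2 c r h d φ ψ θ P →
      IsSolution L ρ1 ρ2 κ α ξ1 ξ2 c r h d φ' ψ' θ' P' → ∀ t ≥ (0:ℝ),
        (∫ x in (0:ℝ)..L,
            ((pdt (dfn φ φ') x t) ^ 2 + (pdt (pdt (dfn φ φ')) x t) ^ 2
              + (pdx (pdt (dfn φ φ')) x t) ^ 2 + (pdx (dfn ψ ψ') x t) ^ 2
              + (pdx (dfn φ φ') x t + dfn ψ ψ' x t) ^ 2
              + (dfn θ θ' x t) ^ 2 + (dfn P P' x t) ^ 2))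
          ≤ C * Real.exp (C₂ * t) *
              energy L ρ1 ρ2 κ α c r d (dfn φ φ') (dfn ψ ψ') (dfn θ θ') (dfn P P') 0 := by
  have hcr : 0 < c + r := by linarith
  set ε := (c*r - d^2)/(c+r) with hε
  have hεpos : 0 < ε := div_pos hcrd hcr
  set m := min ρ1 (min (ρ1*ρ2/κ) (min ρ2 (min κ (min α ε)))) with hm
  have hmpos : 0 < m := by
    apply lt_min hρ1
    apply lt_min (by positivity)
    exact lt_min hρ2 (lt_min hκ (lt_min hα hεpos))
  have hm1 : m ≤ ρ1 := min_le_left _ _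
  have hm2 : m ≤ ρ1*ρ2/κ := le_trans (min_le_right _ _) (min_le_left _ _)
  have hm3 : m ≤ ρ2 := le_trans (min_le_right _ _) (le_trans (min_le_right _ _) (min_le_left _ _))
  have hm4 : m ≤ κ := le_trans (min_le_right _ _) (le_trans (min_le_right _ _)
    (le_trans (min_le_right _ _) (min_le_left _ _)))
  have hm5 : m ≤ α := le_trans (min_le_right _ _) (le_trans (min_le_right _ _)
    (le_trans (min_le_right _ _) (le_trans (min_le_right _ _) (min_le_left _ _))))
  have hm6 : m ≤ ε := le_trans (min_le_right _ _) (le_trans (min_le_right _ _)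
    (le_trans (min_le_right _ _) (le_trans (min_le_right _ _) (min_le_right _ _))))
  refine ⟨2/m, by positivity, 1, one_pos, ?_⟩
  intro φ ψ θ P φ' ψ' θ' P' S S' t ht
  set Λ := dfn φ φ' with hΛ
  set SS := dfn ψ ψ' with hSS
  set χ := dfn θ θ' with hχ
  set M := dfn P P' with hM
  have Sd : IsSolution L ρ1 ρ2 κ α ξ1 ξ2 c r h d Λ SS χ M := isSolution_dfn S S'
  obtain ⟨hφd, hψd, hθd, hPd, _, _⟩ := id Sd
  -- pointwise bound
  have hpt : ∀ x ∈ Set.Icc (0:ℝ) L,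
      (pdt Λ x t) ^ 2 + (pdt (pdt Λ) x t) ^ 2 + (pdx (pdt Λ) x t) ^ 2 + (pdx SS x t) ^ 2
        + (pdx Λ x t + SS x t) ^ 2 + (χ x t) ^ 2 + (M x t) ^ 2
      ≤ (1/m) * Fi ρ1 ρ2 κ α c r d Λ SS χ M x t := by
    intro x _
    have hq := quad_lower hc hr hcrd (χ x t) (M x t)
    have b1 := mul_le_mul_of_nonneg_right hm1 (sq_nonneg (pdt Λ x t))
    have b2 := mul_le_mul_of_nonneg_right hm2 (sq_nonneg (pdt (pdt Λ) x t))
    have b3 := mul_le_mul_of_nonneg_right hm3 (sq_nonneg (pdx (pdt Λ) x t))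
    have b4 := mul_le_mul_of_nonneg_right hm4 (sq_nonneg (pdx Λ x t + SS x t))
    have b5 := mul_le_mul_of_nonneg_right hm5 (sq_nonneg (pdx SS x t))
    have b6 := mul_le_mul_of_nonneg_right hm6
      (add_nonneg (sq_nonneg (χ x t)) (sq_nonneg (M x t)))
    rw [← hε] at hq
    rw [one_div_mul_eq_div, le_div_iff₀ hmpos]
    simp only [Fi]
    nlinarith [b1, b2, b3, b4, b5, b6, hq]
  -- integrability
  have hLHSc : Continuous (fun x => (pdt Λ x t) ^ 2 + (pdt (pdt Λ) x t) ^ 2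
      + (pdx (pdt Λ) x t) ^ 2 + (pdx SS x t) ^ 2 + (pdx Λ x t + SS x t) ^ 2
      + (χ x t) ^ 2 + (M x t) ^ 2) := by
    have c1 := cont_slice (sm_pdt hφd).continuous t
    have c2 := cont_slice (sm_pdt (sm_pdt hφd)).continuous t
    have c3 := cont_slice (sm_pdx (sm_pdt hφd)).continuous t
    have c4 := cont_slice (sm_pdx hψd).continuous t
    have c5 := cont_slice (sm_pdx hφd).continuous t
    have c6 := cont_slice hψd.continuous t
    have c7 := cont_slice hθd.continuous t
    have c8 := cont_slice hPd.continuous t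
    fun_prop
  have hFic : Continuous (fun x => (1/m) * Fi ρ1 ρ2 κ α c r d Λ SS χ M x t) :=
    continuous_const.mul (cont_slice (contFi hφd hψd hθd hPd ρ1 ρ2 κ α c r d) t)
  have hmono := intervalIntegral.integral_mono_on (μ := MeasureTheory.volume) hL.le
    (hLHSc.intervalIntegrable 0 L) (hFic.intervalIntegrable 0 L) hpt
  have hsplit : ∫ x in (0:ℝ)..L, (1/m) * Fi ρ1 ρ2 κ α c r d Λ SS χ M x t
      = (2/m) * energy L ρ1 ρ2 κ α c r d Λ SS χ M t := by
    rw [intervalIntegral.integral_const_mul, energy_eq]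
    ring
  have hEle : energy L ρ1 ρ2 κ α c r d Λ SS χ M t ≤ energy L ρ1 ρ2 κ α c r d Λ SS χ M 0 :=
    energy_le Sd hL hκ hh ht
  have hE0 : 0 ≤ energy L ρ1 ρ2 κ α c r d Λ SS χ M 0 :=
    energy_nonneg hL hρ1 hρ2 hκ hα hc hcrd Λ SS χ M 0
  have hexp : 1 ≤ Real.exp (1 * t) := by
    rw [one_mul]
    exact Real.one_le_exp ht
  calc (∫ x in (0:ℝ)..L,
        ((pdt Λ x t) ^ 2 + (pdt (pdt Λ) x t) ^ 2 + (pdx (pdt Λ) x t) ^ 2 + (pdx SS x t) ^ 2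
          + (pdx Λ x t + SS x t) ^ 2 + (χ x t) ^ 2 + (M x t) ^ 2))
      ≤ (2/m) * energy L ρ1 ρ2 κ α c r d Λ SS χ M t := by rw [← hsplit]; exact hmono
    _ ≤ (2/m) * energy L ρ1 ρ2 κ α c r d Λ SS χ M 0 := by
        apply mul_le_mul_of_nonneg_left hEle (by positivity)
    _ ≤ (2/m) * Real.exp (1 * t) * energy L ρ1 ρ2 κ α c r d Λ SS χ M 0 := by
        have h1 : energy L ρ1 ρ2 κ α c r d Λ SS χ M 0
            ≤ Real.exp (1 * t) * energy L ρ1 ρ2 κ α c r d Λ SS χ M 0 :=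
          le_mul_of_one_le_left hE0 hexp
        have h2 := mul_le_mul_of_nonneg_left h1 (le_of_lt (show (0:ℝ) < 2/m by positivity))
        rw [mul_assoc]
        exact h2
end

section
/- Let (φ, ψ, θ, P) and (Γ, Ξ, Π, Ω) be two classical solutions of the thermodiffusive Bresse–Timoshenko system with Dirichlet boundary conditions which have the same initial data: φ(·,0) = Γ(·,0), φ_t(·,0) = Γ_t(·,0), φ_tt(·,0) = Γ_tt(·,0), ψ(·,0) = Ξ(·,0), ψ_t(·,0) = Ξ_t(·,0), θ(·,0) = Π(·,0), P(·,0) = Ω(·,0) on [0,L]. Then the two solutions coincide: φ = Γ, ψ = Ξ, θ = Π and P = Ω on [0,L] × [0,∞). -/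
open Real intervalIntegral

def Sm (f : ℝ → ℝ → ℝ) : Prop := ContDiff ℝ (⊤ : ℕ∞) (Function.uncurry f)

namespace Sm

variable {f g : ℝ → ℝ → ℝ}

theorem hasDerivAt_x' (hf : Sm f) (x t : ℝ) :
    HasDerivAt (fun y => f y t) (fderiv ℝ (Function.uncurry f) (x, t) (1, 0)) x := by
  have h1 : HasFDerivAt (Function.uncurry f) (fderiv ℝ (Function.uncurry f) (x, t)) (x, t) :=
    (hf.differentiable (by simp) (x, t)).hasFDerivAt
  have h2 : HasDerivAt (fun y : ℝ => (y, t)) ((1 : ℝ), (0 : ℝ)) x :=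
    (hasDerivAt_id x).prodMk (hasDerivAt_const x t)
  exact h1.comp_hasDerivAt x h2

theorem hasDerivAt_t' (hf : Sm f) (x t : ℝ) :
    HasDerivAt (fun s => f x s) (fderiv ℝ (Function.uncurry f) (x, t) (0, 1)) t := by
  have h1 : HasFDerivAt (Function.uncurry f) (fderiv ℝ (Function.uncurry f) (x, t)) (x, t) :=
    (hf.differentiable (by simp) (x, t)).hasFDerivAt
  have h2 : HasDerivAt (fun s : ℝ => (x, s)) ((0 : ℝ), (1 : ℝ)) t :=
    (hasDerivAt_const t x).prodMk (hasDerivAt_id t)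
  exact h1.comp_hasDerivAt t h2

theorem pdx_eq (hf : Sm f) (x t : ℝ) :
    pdx f x t = fderiv ℝ (Function.uncurry f) (x, t) (1, 0) := (hf.hasDerivAt_x' x t).deriv

theorem pdt_eq (hf : Sm f) (x t : ℝ) :
    pdt f x t = fderiv ℝ (Function.uncurry f) (x, t) (0, 1) := (hf.hasDerivAt_t' x t).deriv

theorem hasDerivAt_x (hf : Sm f) (x t : ℝ) :
    HasDerivAt (fun y => f y t) (pdx f x t) x := by
  rw [hf.pdx_eq]; exact hf.hasDerivAt_x' x t

theorem hasDerivAt_t (hf : Sm f) (x t : ℝ) :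
    HasDerivAt (fun s => f x s) (pdt f x t) t := by
  rw [hf.pdt_eq]; exact hf.hasDerivAt_t' x t

theorem pdx_sm (hf : Sm f) : Sm (pdx f) := by
  have : Function.uncurry (pdx f) = fun p : ℝ × ℝ => fderiv ℝ (Function.uncurry f) p (1, 0) := by
    funext p
    exact hf.pdx_eq p.1 p.2
  rw [Sm, this]
  exact (hf.fderiv_right (by simp)).clm_apply contDiff_const

theorem pdt_sm (hf : Sm f) : Sm (pdt f) := by
  have : Function.uncurry (pdt f) = fun p : ℝ × ℝ => fderiv ℝ (Function.uncurry f) p (0, 1) := by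
    funext p
    exact hf.pdt_eq p.1 p.2
  rw [Sm, this]
  exact (hf.fderiv_right (by simp)).clm_apply contDiff_const

theorem cont (hf : Sm f) : Continuous (Function.uncurry f) := hf.continuous

theorem cont_x (hf : Sm f) (t : ℝ) : Continuous (fun y => f y t) :=
  hf.continuous.comp (continuous_id.prodMk continuous_const)

theorem sub (hf : Sm f) (hg : Sm g) : Sm (fun x t => f x t - g x t) := by
  have : Function.uncurry (fun x t => f x t - g x t)
      = fun p : ℝ × ℝ => Function.uncurry f p - Function.uncurry g p := rfl
  rw [Sm, this]
  exact ContDiff.sub hf hg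

end Sm

theorem pdx_sub {f g : ℝ → ℝ → ℝ} (hf : Sm f) (hg : Sm g) :
    pdx (fun x t => f x t - g x t) = fun x t => pdx f x t - pdx g x t := by
  funext x t
  exact ((hf.hasDerivAt_x x t).sub (hg.hasDerivAt_x x t)).deriv

theorem pdt_sub {f g : ℝ → ℝ → ℝ} (hf : Sm f) (hg : Sm g) :
    pdt (fun x t => f x t - g x t) = fun x t => pdt f x t - pdt g x t := by
  funext x t
  exact ((hf.hasDerivAt_t x t).sub (hg.hasDerivAt_t x t)).deriv

theorem pd_swap {f : ℝ → ℝ → ℝ} (hf : Sm f) : pdx (pdt f) = pdt (pdx f) := by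
  funext x t
  set F := Function.uncurry f
  have hF : ContDiff ℝ (⊤ : ℕ∞) F := hf
  have hdF : Differentiable ℝ (fderiv ℝ F) := (hF.fderiv_right (m := 1) (WithTop.coe_le_coe.mpr le_top)).differentiable one_ne_zero
  have hF'' : HasFDerivAt (fderiv ℝ F) (fderiv ℝ (fderiv ℝ F) (x, t)) (x, t) :=
    (hdF (x, t)).hasFDerivAt
  have hsymm := second_derivative_symmetric
    (fun y => ((hF.differentiable (by simp)) y).hasFDerivAt) hF''
  -- pdx (pdt f) x t = f'' (1,0) (0,1)
  have h1 : HasDerivAt (fun y : ℝ => (y, t)) ((1 : ℝ), (0 : ℝ)) x :=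
    (hasDerivAt_id x).prodMk (hasDerivAt_const x t)
  have h2 : HasDerivAt (fun s : ℝ => (x, s)) ((0 : ℝ), (1 : ℝ)) t :=
    (hasDerivAt_const t x).prodMk (hasDerivAt_id t)
  have hx : HasDerivAt (fun y : ℝ => fderiv ℝ F (y, t)) (fderiv ℝ (fderiv ℝ F) (x, t) (1, 0)) x :=
    hF''.comp_hasDerivAt x h1
  have ht : HasDerivAt (fun s : ℝ => fderiv ℝ F (x, s)) (fderiv ℝ (fderiv ℝ F) (x, t) (0, 1)) t :=
    hF''.comp_hasDerivAt t h2
  have hx' : HasDerivAt (fun y : ℝ => fderiv ℝ F (y, t) (0, 1))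
      (fderiv ℝ (fderiv ℝ F) (x, t) (1, 0) (0, 1)) x := by
    simpa using hx.clm_apply (hasDerivAt_const x ((0 : ℝ), (1 : ℝ)))
  have ht' : HasDerivAt (fun s : ℝ => fderiv ℝ F (x, s) (1, 0))
      (fderiv ℝ (fderiv ℝ F) (x, t) (0, 1) (1, 0)) t := by
    simpa using ht.clm_apply (hasDerivAt_const t ((1 : ℝ), (0 : ℝ)))
  have e1 : pdx (pdt f) x t = fderiv ℝ (fderiv ℝ F) (x, t) (1, 0) (0, 1) := by
    have : (fun y => pdt f y t) = fun y : ℝ => fderiv ℝ F (y, t) (0, 1) := by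
      funext y; exact hf.pdt_eq y t
    rw [pdx, this]
    exact hx'.deriv
  have e2 : pdt (pdx f) x t = fderiv ℝ (fderiv ℝ F) (x, t) (0, 1) (1, 0) := by
    have : (fun s => pdx f x s) = fun s : ℝ => fderiv ℝ F (x, s) (1, 0) := by
      funext s; exact hf.pdx_eq x s
    rw [pdt, this]
    exact ht'.deriv
  rw [e1, e2, hsymm]

theorem Sm.cont_t {f : ℝ → ℝ → ℝ} (hf : Sm f) (x : ℝ) : Continuous (fun s => f x s) :=
  hf.continuous.comp (continuous_const.prodMk continuous_id)

theorem pdx_add {f g : ℝ → ℝ → ℝ} (hf : Sm f) (hg : Sm g) (x t : ℝ) :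
    pdx (fun y s => f y s + g y s) x t = pdx f x t + pdx g x t :=
  ((hf.hasDerivAt_x x t).add (hg.hasDerivAt_x x t)).deriv

/-- Energy density. -/
noncomputable def GG (κ ρ1 ρ2 α c r d : ℝ) (u v w q : ℝ → ℝ → ℝ) : ℝ → ℝ → ℝ := fun x t =>
  κ*ρ1*(pdt u x t * pdt u x t) + κ*κ*((pdx u x t + v x t) * (pdx u x t + v x t))
  + κ*α*(pdx v x t * pdx v x t) + ρ1*ρ2*(pdt (pdt u) x t * pdt (pdt u) x t)
  + κ*ρ2*(pdx (pdt u) x t * pdx (pdt u) x t)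
  + κ*(c*(w x t * w x t) + 2*d*(w x t * q x t) + r*(q x t * q x t))

/-- Energy flux. -/
noncomputable def Hf (κ ρ2 α ξ1 ξ2 h : ℝ) (u v w q : ℝ → ℝ → ℝ) : ℝ → ℝ → ℝ := fun x t =>
  2*κ*( κ*((pdx u x t + v x t) * pdt u x t) + α*(pdx v x t * pdt v x t)
    + ρ2*(pdt (pdt u) x t * pdx (pdt u) x t) + ρ2*(pdt (pdt u) x t * pdt v x t)
    + κ*(w x t * pdx w x t) + h*(q x t * pdx q x t)
    + ξ1*(w x t * pdt v x t) + ξ2*(q x t * pdt v x t) )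

section derivs

variable {u v w q : ℝ → ℝ → ℝ} (κ ρ1 ρ2 α c r d ξ1 ξ2 h : ℝ)
variable (hu : Sm u) (hv : Sm v) (hw : Sm w) (hq : Sm q)

include hu hv hw hq in
theorem sm_GG : Sm (GG κ ρ1 ρ2 α c r d u v w q) := by
  have h1 := hu.pdt_sm
  have h2 := hu.pdx_sm
  have h3 := hv.pdx_sm
  have h4 := h1.pdt_sm
  have h5 := h1.pdx_sm
  unfold Sm GG Function.uncurry at *
  fun_prop

include hu hv hw hq in
theorem sm_Hf : Sm (Hf κ ρ2 α ξ1 ξ2 h u v w q) := by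
  have h1 := hu.pdt_sm
  have h2 := hu.pdx_sm
  have h3 := hv.pdx_sm
  have h4 := h1.pdt_sm
  have h5 := h1.pdx_sm
  have h6 := hv.pdt_sm
  have h7 := hw.pdx_sm
  have h8 := hq.pdx_sm
  unfold Sm Hf Function.uncurry at *
  fun_prop

include hu hv hw hq in
theorem hGt (x t : ℝ) :
    HasDerivAt (fun s => GG κ ρ1 ρ2 α c r d u v w q x s)
      (κ*ρ1*(pdt (pdt u) x t * pdt u x t + pdt u x t * pdt (pdt u) x t)
      + κ*κ*((pdx (pdt u) x t + pdt v x t) * (pdx u x t + v x t)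
          + (pdx u x t + v x t) * (pdx (pdt u) x t + pdt v x t))
      + κ*α*(pdx (pdt v) x t * pdx v x t + pdx v x t * pdx (pdt v) x t)
      + ρ1*ρ2*(pdt (pdt (pdt u)) x t * pdt (pdt u) x t + pdt (pdt u) x t * pdt (pdt (pdt u)) x t)
      + κ*ρ2*(pdx (pdt (pdt u)) x t * pdx (pdt u) x t + pdx (pdt u) x t * pdx (pdt (pdt u)) x t)
      + κ*(c*(pdt w x t * w x t + w x t * pdt w x t)
          + 2*d*(pdt w x t * q x t + w x t * pdt q x t)
          + r*(pdt q x t * q x t + q x t * pdt q x t))) t := by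
  have a1 : HasDerivAt (fun s => pdt u x s) (pdt (pdt u) x t) t := hu.pdt_sm.hasDerivAt_t x t
  have a2 : HasDerivAt (fun s => pdx u x s) (pdx (pdt u) x t) t := by
    rw [pd_swap hu]; exact hu.pdx_sm.hasDerivAt_t x t
  have av : HasDerivAt (fun s => v x s) (pdt v x t) t := hv.hasDerivAt_t x t
  have a3 : HasDerivAt (fun s => pdx v x s) (pdx (pdt v) x t) t := by
    rw [pd_swap hv]; exact hv.pdx_sm.hasDerivAt_t x t
  have a4 : HasDerivAt (fun s => pdt (pdt u) x s) (pdt (pdt (pdt u)) x t) t :=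
    hu.pdt_sm.pdt_sm.hasDerivAt_t x t
  have a5 : HasDerivAt (fun s => pdx (pdt u) x s) (pdx (pdt (pdt u)) x t) t := by
    rw [pd_swap hu.pdt_sm]; exact hu.pdt_sm.pdx_sm.hasDerivAt_t x t
  have aw : HasDerivAt (fun s => w x s) (pdt w x t) t := hw.hasDerivAt_t x t
  have aq : HasDerivAt (fun s => q x s) (pdt q x t) t := hq.hasDerivAt_t x t
  exact ((((((a1.mul a1).const_mul (κ*ρ1)).add
    (((a2.add av).mul (a2.add av)).const_mul (κ*κ))).add
    (((a3.mul a3).const_mul (κ*α)))).add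
    (((a4.mul a4).const_mul (ρ1*ρ2)))).add
    (((a5.mul a5).const_mul (κ*ρ2)))).add
    (((((aw.mul aw).const_mul c).add ((aw.mul aq).const_mul (2*d))).add
      ((aq.mul aq).const_mul r)).const_mul κ)

include hu hv hw hq in
theorem hHx (x t : ℝ) :
    HasDerivAt (fun y => Hf κ ρ2 α ξ1 ξ2 h u v w q y t)
      (2*κ*( κ*((pdx (pdx u) x t + pdx v x t) * pdt u x t
            + (pdx u x t + v x t) * pdx (pdt u) x t)
        + α*(pdx (pdx v) x t * pdt v x t + pdx v x t * pdx (pdt v) x t)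
        + ρ2*(pdx (pdt (pdt u)) x t * pdx (pdt u) x t
            + pdt (pdt u) x t * pdx (pdx (pdt u)) x t)
        + ρ2*(pdx (pdt (pdt u)) x t * pdt v x t + pdt (pdt u) x t * pdx (pdt v) x t)
        + κ*(pdx w x t * pdx w x t + w x t * pdx (pdx w) x t)
        + h*(pdx q x t * pdx q x t + q x t * pdx (pdx q) x t)
        + ξ1*(pdx w x t * pdt v x t + w x t * pdx (pdt v) x t)
        + ξ2*(pdx q x t * pdt v x t + q x t * pdx (pdt v) x t))) x := by
  have b1 : HasDerivAt (fun y => pdt u y t) (pdx (pdt u) x t) x := hu.pdt_sm.hasDerivAt_x x t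
  have b2 : HasDerivAt (fun y => pdx u y t) (pdx (pdx u) x t) x := hu.pdx_sm.hasDerivAt_x x t
  have bv : HasDerivAt (fun y => v y t) (pdx v x t) x := hv.hasDerivAt_x x t
  have b3 : HasDerivAt (fun y => pdx v y t) (pdx (pdx v) x t) x := hv.pdx_sm.hasDerivAt_x x t
  have b4 : HasDerivAt (fun y => pdt (pdt u) y t) (pdx (pdt (pdt u)) x t) x :=
    hu.pdt_sm.pdt_sm.hasDerivAt_x x t
  have b5 : HasDerivAt (fun y => pdx (pdt u) y t) (pdx (pdx (pdt u)) x t) x :=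
    hu.pdt_sm.pdx_sm.hasDerivAt_x x t
  have bvt : HasDerivAt (fun y => pdt v y t) (pdx (pdt v) x t) x := hv.pdt_sm.hasDerivAt_x x t
  have bw : HasDerivAt (fun y => w y t) (pdx w x t) x := hw.hasDerivAt_x x t
  have bwx : HasDerivAt (fun y => pdx w y t) (pdx (pdx w) x t) x := hw.pdx_sm.hasDerivAt_x x t
  have bq : HasDerivAt (fun y => q y t) (pdx q x t) x := hq.hasDerivAt_x x t
  have bqx : HasDerivAt (fun y => pdx q y t) (pdx (pdx q) x t) x := hq.pdx_sm.hasDerivAt_x x t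
  exact (((((((((((b2.add bv).mul b1).const_mul κ).add
    ((b3.mul bvt).const_mul α)).add
    ((b4.mul b5).const_mul ρ2)).add
    ((b4.mul bvt).const_mul ρ2)).add
    ((bw.mul bwx).const_mul κ)).add
    ((bq.mul bqx).const_mul h)).add
    ((bw.mul bvt).const_mul ξ1)).add
    ((bq.mul bvt).const_mul ξ2)).const_mul (2*κ))

end derivs

theorem pdt_zero_of_zero {f : ℝ → ℝ → ℝ} {z t : ℝ} (hz : ∀ s > (0:ℝ), f z s = 0)
    (ht : 0 < t) : pdt f z t = 0 := by
  have hev : (fun s => f z s) =ᶠ[nhds t] fun _ => (0:ℝ) := by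
    filter_upwards [Ioi_mem_nhds ht] with s hs using hz s hs
  exact hev.deriv_eq.trans (deriv_const _ _)

theorem quad_zero {c r d W Q : ℝ} (hc : 0 < c) (hcrd : c * r - d ^ 2 > 0)
    (hWQ : c*(W*W) + 2*d*(W*Q) + r*(Q*Q) = 0) : W = 0 ∧ Q = 0 := by
  have hq2 : Q * Q ≤ 0 := by nlinarith [sq_nonneg (c*W + d*Q)]
  have hQ : Q = 0 := mul_self_eq_zero.mp (le_antisymm hq2 (mul_self_nonneg _))
  rw [hQ] at hWQ
  have hW2 : c * (W*W) = 0 := by linarith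
  have hW : W = 0 := mul_self_eq_zero.mp ((mul_eq_zero.mp hW2).resolve_left (ne_of_gt hc))
  exact ⟨hW, hQ⟩

theorem zero_sol (L ρ1 ρ2 κ α ξ1 ξ2 c r h d : ℝ)
    (hL : 0 < L) (hρ1 : 0 < ρ1) (hρ2 : 0 < ρ2) (hκ : 0 < κ) (hα : 0 < α)
    (hξ1 : 0 < ξ1) (hξ2 : 0 < ξ2) (hc : 0 < c) (hr : 0 < r) (hh : 0 < h)
    (hcrd : c * r - d ^ 2 > 0)
    (u v w q : ℝ → ℝ → ℝ) (hu : Sm u) (hv : Sm v) (hw : Sm w) (hq : Sm q)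
    (heq1 : ∀ x ∈ Set.Ioo (0:ℝ) L, ∀ t > (0:ℝ),
      ρ1 * pdt (pdt u) x t = κ * (pdx (pdx u) x t + pdx v x t))
    (heq2 : ∀ x ∈ Set.Ioo (0:ℝ) L, ∀ t > (0:ℝ),
      ρ2 * pdx (pdt (pdt u)) x t + α * pdx (pdx v) x t
        = κ * (pdx u x t + v x t) - ξ1 * pdx w x t - ξ2 * pdx q x t)
    (heq3 : ∀ x ∈ Set.Ioo (0:ℝ) L, ∀ t > (0:ℝ),
      c * pdt w x t + d * pdt q x t = κ * pdx (pdx w) x t + ξ1 * pdx (pdt v) x t)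
    (heq4 : ∀ x ∈ Set.Ioo (0:ℝ) L, ∀ t > (0:ℝ),
      d * pdt w x t + r * pdt q x t = h * pdx (pdx q) x t + ξ2 * pdx (pdt v) x t)
    (hbc : ∀ t ≥ (0:ℝ), u 0 t = 0 ∧ u L t = 0 ∧ v 0 t = 0 ∧ v L t = 0 ∧
      w 0 t = 0 ∧ w L t = 0 ∧ q 0 t = 0 ∧ q L t = 0)
    (hinit : ∀ x ∈ Set.Icc (0:ℝ) L, u x 0 = 0 ∧ pdt u x 0 = 0 ∧ pdt (pdt u) x 0 = 0 ∧
      v x 0 = 0 ∧ pdt v x 0 = 0 ∧ w x 0 = 0 ∧ q x 0 = 0) :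
    ∀ x ∈ Set.Icc (0:ℝ) L, ∀ t ≥ (0:ℝ), u x t = 0 ∧ v x t = 0 ∧ w x t = 0 ∧ q x t = 0 := by
  set G0 := GG κ ρ1 ρ2 α c r d u v w q with hG0
  set H0 := Hf κ ρ2 α ξ1 ξ2 h u v w q with hH0
  have smG : Sm G0 := sm_GG κ ρ1 ρ2 α c r d hu hv hw hq
  have smH : Sm H0 := sm_Hf κ ρ2 α ξ1 ξ2 h hu hv hw hq
  -- quadratic form nonnegativity
  have hquad : ∀ W Q : ℝ, 0 ≤ c*(W*W) + 2*d*(W*Q) + r*(Q*Q) := by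
    intro W Q
    nlinarith [sq_nonneg (c*W + d*Q), mul_nonneg hcrd.le (mul_self_nonneg Q), hc,
      mul_pos hc hc]
  -- pointwise nonnegativity of the energy density
  have hpos : ∀ y t : ℝ, 0 ≤ G0 y t := by
    intro y t
    have h1 : 0 ≤ κ*ρ1*(pdt u y t * pdt u y t) :=
      mul_nonneg (by positivity) (mul_self_nonneg _)
    have h2 : 0 ≤ κ*κ*((pdx u y t + v y t) * (pdx u y t + v y t)) :=
      mul_nonneg (by positivity) (mul_self_nonneg _)
    have h3 : 0 ≤ κ*α*(pdx v y t * pdx v y t) :=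
      mul_nonneg (by positivity) (mul_self_nonneg _)
    have h4 : 0 ≤ ρ1*ρ2*(pdt (pdt u) y t * pdt (pdt u) y t) :=
      mul_nonneg (by positivity) (mul_self_nonneg _)
    have h5 : 0 ≤ κ*ρ2*(pdx (pdt u) y t * pdx (pdt u) y t) :=
      mul_nonneg (by positivity) (mul_self_nonneg _)
    have h6 : 0 ≤ κ*(c*(w y t * w y t) + 2*d*(w y t * q y t) + r*(q y t * q y t)) :=
      mul_nonneg hκ.le (hquad _ _)
    have : G0 y t = κ*ρ1*(pdt u y t * pdt u y t)
        + κ*κ*((pdx u y t + v y t) * (pdx u y t + v y t))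
        + κ*α*(pdx v y t * pdx v y t) + ρ1*ρ2*(pdt (pdt u) y t * pdt (pdt u) y t)
        + κ*ρ2*(pdx (pdt u) y t * pdx (pdt u) y t)
        + κ*(c*(w y t * w y t) + 2*d*(w y t * q y t) + r*(q y t * q y t)) := rfl
    rw [this]; linarith
  -- the key differential identity
  have key : ∀ x ∈ Set.Ioo (0:ℝ) L, ∀ t > (0:ℝ),
      pdt G0 x t = pdx H0 x t
        - 2*κ*(κ*(pdx w x t * pdx w x t) + h*(pdx q x t * pdx q x t)) := by
    intro x hx t ht
    have R1 := heq1 x hx t ht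
    have R2 := heq2 x hx t ht
    have R3 := heq3 x hx t ht
    have R4 := heq4 x hx t ht
    -- time derivative of equation 1
    have hev : (fun s => ρ1 * pdt (pdt u) x s)
        =ᶠ[nhds t] (fun s => κ * (pdx (pdx u) x s + pdx v x s)) := by
      filter_upwards [Ioi_mem_nhds ht] with s hs using heq1 x hx s hs
    have dL : HasDerivAt (fun s => ρ1 * pdt (pdt u) x s) (ρ1 * pdt (pdt (pdt u)) x t) t :=
      (hu.pdt_sm.pdt_sm.hasDerivAt_t x t).const_mul ρ1
    have c2 : HasDerivAt (fun s => pdx (pdx u) x s) (pdx (pdx (pdt u)) x t) t := by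
      rw [pd_swap hu, pd_swap hu.pdx_sm]
      exact hu.pdx_sm.pdx_sm.hasDerivAt_t x t
    have c3 : HasDerivAt (fun s => pdx v x s) (pdx (pdt v) x t) t := by
      rw [pd_swap hv]; exact hv.pdx_sm.hasDerivAt_t x t
    have dR : HasDerivAt (fun s => κ * (pdx (pdx u) x s + pdx v x s))
        (κ * (pdx (pdx (pdt u)) x t + pdx (pdt v) x t)) t := (c2.add c3).const_mul κ
    have R1' : ρ1 * pdt (pdt (pdt u)) x t
        = κ * (pdx (pdx (pdt u)) x t + pdx (pdt v) x t) := by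
      have hdd := hev.deriv_eq
      rw [dL.deriv, dR.deriv] at hdd
      exact hdd
    have eGt : pdt G0 x t = _ := (hGt κ ρ1 ρ2 α c r d hu hv hw hq x t).deriv
    have eHx : pdx H0 x t = _ := (hHx κ ρ2 α ξ1 ξ2 h hu hv hw hq x t).deriv
    rw [eGt, eHx]
    linear_combination 2*κ*(pdt u x t)*R1 + 2*ρ2*(pdt (pdt u) x t)*R1'
      - 2*κ*(pdt v x t)*R2 + 2*κ*(w x t)*R3 + 2*κ*(q x t)*R4
  -- derivative of the energy
  have hEderiv : ∀ t₀ : ℝ, HasDerivAt (fun τ => ∫ y in (0:ℝ)..L, G0 y τ)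
      (∫ y in (0:ℝ)..L, pdt G0 y t₀) t₀ := by
    intro t₀
    obtain ⟨C, hC⟩ := ((isCompact_Icc (a := (0:ℝ)) (b := L)).prod
      (isCompact_Icc (a := t₀ - 1) (b := t₀ + 1))).exists_bound_of_continuousOn
      (smG.pdt_sm.cont.continuousOn)
    refine (intervalIntegral.hasDerivAt_integral_of_dominated_loc_of_deriv_le
      (F := fun τ y => G0 y τ) (F' := fun τ y => pdt G0 y τ) (bound := fun _ => C)
      (Metric.ball_mem_nhds t₀ one_pos) ?_ ?_ ?_ ?_ ?_ ?_).2
    · exact Filter.Eventually.of_forall fun τ => (smG.cont_x τ).aestronglyMeasurable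
    · exact (smG.cont_x t₀).intervalIntegrable 0 L
    · exact (smG.pdt_sm.cont_x t₀).aestronglyMeasurable
    · refine Filter.Eventually.of_forall fun y hy => fun s hs => hC (y, s) ?_
      rw [Set.uIoc_of_le hL.le] at hy
      rw [Real.ball_eq_Ioo] at hs
      exact ⟨Set.mem_Icc_of_Ioc hy, Set.mem_Icc_of_Ioo hs⟩
    · exact intervalIntegrable_const
    · exact Filter.Eventually.of_forall fun y _ => fun s _ => smG.hasDerivAt_t y s
  -- E(0) = 0
  have haeL : ∀ᵐ z : ℝ, z ≠ L := by
    rw [MeasureTheory.ae_iff]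
    have : {z : ℝ | ¬ z ≠ L} = {L} := by ext z; simp
    rw [this]
    exact Real.volume_singleton
  have hae0 : ∀ᵐ z : ℝ, z ≠ (0:ℝ) := by
    rw [MeasureTheory.ae_iff]
    have : {z : ℝ | ¬ z ≠ (0:ℝ)} = {(0:ℝ)} := by ext z; simp
    rw [this]
    exact Real.volume_singleton
  have hE0 : (∫ y in (0:ℝ)..L, G0 y 0) = 0 := by
    have hz : ∀ y ∈ Set.Ioo (0:ℝ) L, G0 y 0 = 0 := by
      intro y hy
      obtain ⟨i1, i2, i3, i4, i5, i6, i7⟩ := hinit y (Set.Ioo_subset_Icc_self hy)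
      have hux : pdx u y 0 = 0 := by
        have hev : (fun z => u z 0) =ᶠ[nhds y] fun _ => (0:ℝ) := by
          filter_upwards [Ioo_mem_nhds hy.1 hy.2] with z hz
          exact (hinit z (Set.Ioo_subset_Icc_self hz)).1
        exact hev.deriv_eq.trans (deriv_const _ _)
      have hvx : pdx v y 0 = 0 := by
        have hev : (fun z => v z 0) =ᶠ[nhds y] fun _ => (0:ℝ) := by
          filter_upwards [Ioo_mem_nhds hy.1 hy.2] with z hz
          exact (hinit z (Set.Ioo_subset_Icc_self hz)).2.2.2.1
        exact hev.deriv_eq.trans (deriv_const _ _)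
      have hutx : pdx (pdt u) y 0 = 0 := by
        have hev : (fun z => pdt u z 0) =ᶠ[nhds y] fun _ => (0:ℝ) := by
          filter_upwards [Ioo_mem_nhds hy.1 hy.2] with z hz
          exact (hinit z (Set.Ioo_subset_Icc_self hz)).2.1
        exact hev.deriv_eq.trans (deriv_const _ _)
      show GG κ ρ1 ρ2 α c r d u v w q y 0 = 0
      simp only [GG, i1, i2, i3, i4, i5, i6, i7, hux, hvx, hutx]
      ring
    have hcong : ∀ᵐ y : ℝ, y ∈ Set.uIoc (0:ℝ) L → G0 y 0 = (fun _ => (0:ℝ)) y := by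
      filter_upwards [haeL] with y hyL hyI
      rw [Set.uIoc_of_le hL.le] at hyI
      exact hz y ⟨hyI.1, lt_of_le_of_ne hyI.2 hyL⟩
    rw [intervalIntegral.integral_congr_ae hcong]
    simp
  -- E' ≤ 0 for t > 0
  have hE'le : ∀ t > (0:ℝ), (∫ y in (0:ℝ)..L, pdt G0 y t) ≤ 0 := by
    intro t ht
    have hbL : ∀ z : ℝ, (z = 0 ∨ z = L) → pdt u z t = 0 ∧ pdt (pdt u) z t = 0 ∧
        pdt v z t = 0 ∧ w z t = 0 ∧ q z t = 0 := by
      intro z hzc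
      have hubc : ∀ s > (0:ℝ), u z s = 0 := by
        intro s hs
        rcases hzc with hz | hz <;> rw [hz]
        · exact (hbc s hs.le).1
        · exact (hbc s hs.le).2.1
      have hvbc : ∀ s > (0:ℝ), v z s = 0 := by
        intro s hs
        rcases hzc with hz | hz <;> rw [hz]
        · exact (hbc s hs.le).2.2.1
        · exact (hbc s hs.le).2.2.2.1
      have h1 : ∀ s > (0:ℝ), pdt u z s = 0 := fun s hs => pdt_zero_of_zero hubc hs
      refine ⟨h1 t ht, pdt_zero_of_zero h1 ht, pdt_zero_of_zero hvbc ht, ?_, ?_⟩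
      · rcases hzc with hz | hz <;> rw [hz]
        · exact (hbc t ht.le).2.2.2.2.1
        · exact (hbc t ht.le).2.2.2.2.2.1
      · rcases hzc with hz | hz <;> rw [hz]
        · exact (hbc t ht.le).2.2.2.2.2.2.1
        · exact (hbc t ht.le).2.2.2.2.2.2.2
    have hflux : ∀ z : ℝ, (z = 0 ∨ z = L) → H0 z t = 0 := by
      intro z hzc
      obtain ⟨e1, e2, e3, e4, e5⟩ := hbL z hzc
      show Hf κ ρ2 α ξ1 ξ2 h u v w q z t = 0
      simp only [Hf, e1, e2, e3, e4, e5]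
      ring
    have hmono : (∫ y in (0:ℝ)..L, pdt G0 y t) ≤ ∫ y in (0:ℝ)..L, pdx H0 y t := by
      apply intervalIntegral.integral_mono_ae_restrict hL.le
        ((smG.pdt_sm.cont_x t).intervalIntegrable 0 L)
        ((smH.pdx_sm.cont_x t).intervalIntegrable 0 L)
      refine (MeasureTheory.ae_restrict_iff' measurableSet_Icc).mpr ?_
      filter_upwards [hae0, haeL] with y hy0 hyL hyI
      have hyIoo : y ∈ Set.Ioo (0:ℝ) L :=
        ⟨lt_of_le_of_ne hyI.1 (Ne.symm hy0), lt_of_le_of_ne hyI.2 hyL⟩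
      rw [key y hyIoo t ht]
      have n1 : 0 ≤ κ*(pdx w y t * pdx w y t) := mul_nonneg hκ.le (mul_self_nonneg _)
      have n2 : 0 ≤ h*(pdx q y t * pdx q y t) := mul_nonneg hh.le (mul_self_nonneg _)
      nlinarith [hκ]
    have hftc : (∫ y in (0:ℝ)..L, pdx H0 y t) = H0 L t - H0 0 t := by
      apply intervalIntegral.integral_deriv_eq_sub' (fun y => H0 y t) rfl
        (fun y _ => (smH.hasDerivAt_x y t).differentiableAt)
        ((smH.pdx_sm.cont_x t).continuousOn)
    rw [hftc, hflux 0 (Or.inl rfl), hflux L (Or.inr rfl)] at hmono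
    simpa using hmono
  -- E is antitone on [0, ∞), hence E ≡ 0 there
  have hanti : AntitoneOn (fun τ => ∫ y in (0:ℝ)..L, G0 y τ) (Set.Ici (0:ℝ)) := by
    apply antitoneOn_of_deriv_nonpos (convex_Ici 0)
    · have hdiffE : Differentiable ℝ (fun τ => ∫ y in (0:ℝ)..L, G0 y τ) :=
        fun t => (hEderiv t).differentiableAt
      exact hdiffE.continuous.continuousOn
    · intro t _
      exact (hEderiv t).differentiableAt.differentiableWithinAt
    · intro t ht
      rw [interior_Ici] at ht
      rw [(hEderiv t).deriv]
      exact hE'le t ht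
  have hEzero : ∀ t ≥ (0:ℝ), (∫ y in (0:ℝ)..L, G0 y t) = 0 := by
    intro t ht
    have h1 : (∫ y in (0:ℝ)..L, G0 y t) ≤ 0 := by
      have := hanti (Set.self_mem_Ici) ht ht
      simpa [hE0] using this
    have h2 : 0 ≤ ∫ y in (0:ℝ)..L, G0 y t :=
      intervalIntegral.integral_nonneg hL.le fun y _ => hpos y t
    linarith
  -- pointwise vanishing of the energy density
  have hGzero : ∀ t ≥ (0:ℝ), ∀ x ∈ Set.Ioo (0:ℝ) L, G0 x t = 0 := by
    intro t ht x hx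
    have hFd : ∀ z : ℝ, HasDerivAt (fun z' => ∫ y in (0:ℝ)..z', G0 y t) (G0 z t) z := by
      intro z
      exact intervalIntegral.integral_hasDerivAt_right
        ((smG.cont_x t).intervalIntegrable 0 z)
        ((smG.cont_x t).stronglyMeasurableAtFilter _ _)
        (smG.cont_x t).continuousAt
    have hFmono : Monotone (fun z' => ∫ y in (0:ℝ)..z', G0 y t) := by
      apply monotone_of_deriv_nonneg (fun z => (hFd z).differentiableAt)
      intro z
      rw [(hFd z).deriv]
      exact hpos z t
    have hFz : ∀ z ∈ Set.Icc (0:ℝ) L, (∫ y in (0:ℝ)..z, G0 y t) = 0 := by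
      intro z hz
      have hub : (∫ y in (0:ℝ)..z, G0 y t) ≤ ∫ y in (0:ℝ)..L, G0 y t := hFmono hz.2
      have hlb : (∫ y in (0:ℝ)..(0:ℝ), G0 y t) ≤ ∫ y in (0:ℝ)..z, G0 y t := hFmono hz.1
      rw [intervalIntegral.integral_same] at hlb
      rw [hEzero t ht] at hub
      linarith
    have hev : (fun z' => ∫ y in (0:ℝ)..z', G0 y t) =ᶠ[nhds x] fun _ => (0:ℝ) := by
      filter_upwards [Ioo_mem_nhds hx.1 hx.2] with z hz
      exact hFz z (Set.Ioo_subset_Icc_self hz)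
    have := hev.deriv_eq.trans (deriv_const _ _)
    rw [(hFd x).deriv] at this
    exact this
  -- component extraction
  have hcomp : ∀ t ≥ (0:ℝ), ∀ x ∈ Set.Ioo (0:ℝ) L,
      pdt u x t = 0 ∧ pdx v x t = 0 ∧ w x t = 0 ∧ q x t = 0 := by
    intro t ht x hx
    have hG := hGzero t ht x hx
    have hGe : κ*ρ1*(pdt u x t * pdt u x t)
        + κ*κ*((pdx u x t + v x t) * (pdx u x t + v x t))
        + κ*α*(pdx v x t * pdx v x t) + ρ1*ρ2*(pdt (pdt u) x t * pdt (pdt u) x t)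
        + κ*ρ2*(pdx (pdt u) x t * pdx (pdt u) x t)
        + κ*(c*(w x t * w x t) + 2*d*(w x t * q x t) + r*(q x t * q x t)) = 0 := hG
    have h1 : 0 ≤ κ*ρ1*(pdt u x t * pdt u x t) :=
      mul_nonneg (by positivity) (mul_self_nonneg _)
    have h2 : 0 ≤ κ*κ*((pdx u x t + v x t) * (pdx u x t + v x t)) :=
      mul_nonneg (by positivity) (mul_self_nonneg _)
    have h3 : 0 ≤ κ*α*(pdx v x t * pdx v x t) :=
      mul_nonneg (by positivity) (mul_self_nonneg _)
    have h4 : 0 ≤ ρ1*ρ2*(pdt (pdt u) x t * pdt (pdt u) x t) :=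
      mul_nonneg (by positivity) (mul_self_nonneg _)
    have h5 : 0 ≤ κ*ρ2*(pdx (pdt u) x t * pdx (pdt u) x t) :=
      mul_nonneg (by positivity) (mul_self_nonneg _)
    have h6 : 0 ≤ κ*(c*(w x t * w x t) + 2*d*(w x t * q x t) + r*(q x t * q x t)) :=
      mul_nonneg hκ.le (hquad _ _)
    have e1 : pdt u x t = 0 := by
      have : κ*ρ1*(pdt u x t * pdt u x t) = 0 := by linarith
      have := (mul_eq_zero.mp this).resolve_left (ne_of_gt (mul_pos hκ hρ1))
      exact mul_self_eq_zero.mp this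
    have e2 : pdx v x t = 0 := by
      have : κ*α*(pdx v x t * pdx v x t) = 0 := by linarith
      have := (mul_eq_zero.mp this).resolve_left (ne_of_gt (mul_pos hκ hα))
      exact mul_self_eq_zero.mp this
    have e6 : c*(w x t * w x t) + 2*d*(w x t * q x t) + r*(q x t * q x t) = 0 := by
      have : κ*(c*(w x t * w x t) + 2*d*(w x t * q x t) + r*(q x t * q x t)) = 0 := by
        linarith
      exact (mul_eq_zero.mp this).resolve_left (ne_of_gt hκ)
    obtain ⟨ew0, eq0⟩ := quad_zero hc hcrd e6
    exact ⟨e1, e2, ew0, eq0⟩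
  -- conclusion
  intro x hx t ht
  rcases eq_or_lt_of_le hx.1 with h0 | h0
  · obtain ⟨b1, _, b3, _, b5, _, b7, _⟩ := hbc t ht
    rw [← h0]
    exact ⟨b1, b3, b5, b7⟩
  rcases eq_or_lt_of_le hx.2 with hL' | hL'
  · obtain ⟨_, b2, _, b4, _, b6, _, b8⟩ := hbc t ht
    rw [hL']
    exact ⟨b2, b4, b6, b8⟩
  have hxI : x ∈ Set.Ioo (0:ℝ) L := ⟨h0, hL'⟩
  have hwq := hcomp t ht x hxI
  have hu0 : u x t = 0 := by
    have hDu : ∀ s ∈ Set.uIcc (0:ℝ) t, HasDerivAt (fun s' => u x s') (pdt u x s) s :=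
      fun s _ => hu.hasDerivAt_t x s
    have e := intervalIntegral.integral_eq_sub_of_hasDerivAt hDu
      ((hu.pdt_sm.cont_t x).intervalIntegrable 0 t)
    have ez : (∫ s in (0:ℝ)..t, pdt u x s) = 0 := by
      have : Set.EqOn (fun s => pdt u x s) (fun _ => (0:ℝ)) (Set.uIcc (0:ℝ) t) := by
        intro s hs
        rw [Set.uIcc_of_le ht] at hs
        exact (hcomp s hs.1 x hxI).1
      rw [intervalIntegral.integral_congr this]
      simp
    rw [ez] at e
    have := (hinit x (Set.Ioo_subset_Icc_self hxI)).1
    linarith [e.symm]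
  have hv0 : v x t = 0 := by
    have hDv : ∀ y ∈ Set.uIcc (0:ℝ) x, HasDerivAt (fun y' => v y' t) (pdx v y t) y :=
      fun y _ => hv.hasDerivAt_x y t
    have e := intervalIntegral.integral_eq_sub_of_hasDerivAt hDv
      ((hv.pdx_sm.cont_x t).intervalIntegrable 0 x)
    have ez : (∫ y in (0:ℝ)..x, pdx v y t) = 0 := by
      have hcong : ∀ᵐ y : ℝ, y ∈ Set.uIoc (0:ℝ) x → pdx v y t = (fun _ => (0:ℝ)) y := by
        refine Filter.Eventually.of_forall fun y hy => ?_
        rw [Set.uIoc_of_le h0.le] at hy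
        exact (hcomp t ht y ⟨hy.1, lt_of_le_of_lt hy.2 hL'⟩).2.1
      rw [intervalIntegral.integral_congr_ae hcong]
      simp
    rw [ez] at e
    have hvb : v 0 t = 0 := (hbc t ht).2.2.1
    linarith [e.symm]
  exact ⟨hu0, hv0, hwq.2.2.1, hwq.2.2.2⟩

/-- Uniqueness: two classical solutions with the same initial data coincide. -/
theorem uniqueness (L ρ1 ρ2 κ α ξ1 ξ2 c r h d : ℝ)
    (hL : 0 < L) (hρ1 : 0 < ρ1) (hρ2 : 0 < ρ2) (hκ : 0 < κ) (hα : 0 < α)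
    (hξ1 : 0 < ξ1) (hξ2 : 0 < ξ2) (hc : 0 < c) (hr : 0 < r) (hh : 0 < h)
    (hcrd : c * r - d ^ 2 > 0)
    (φ ψ θ P φ' ψ' θ' P' : ℝ → ℝ → ℝ)
    (hsol : IsSolution L ρ1 ρ2 κ α ξ1 ξ2 c r h d φ ψ θ P)
    (hsol' : IsSolution L ρ1 ρ2 κ α ξ1 ξ2 c r h d φ' ψ' θ' P')
    (hinit : ∀ x ∈ Set.Icc (0:ℝ) L,
      φ x 0 = φ' x 0 ∧ pdt φ x 0 = pdt φ' x 0 ∧ pdt (pdt φ) x 0 = pdt (pdt φ') x 0 ∧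
      ψ x 0 = ψ' x 0 ∧ pdt ψ x 0 = pdt ψ' x 0 ∧ θ x 0 = θ' x 0 ∧ P x 0 = P' x 0) :
    ∀ x ∈ Set.Icc (0:ℝ) L, ∀ t ≥ (0:ℝ),
      φ x t = φ' x t ∧ ψ x t = ψ' x t ∧ θ x t = θ' x t ∧ P x t = P' x t := by
  obtain ⟨hφ, hψ, hθ, hP, heq, hb⟩ := hsol
  obtain ⟨hφ', hψ', hθ', hP', heq', hb'⟩ := hsol'
  have hφ : Sm φ := hφ
  have hψ : Sm ψ := hψ
  have hθ : Sm θ := hθ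
  have hP : Sm P := hP
  have hφ' : Sm φ' := hφ'
  have hψ' : Sm ψ' := hψ'
  have hθ' : Sm θ' := hθ'
  have hP' : Sm P' := hP'
  set u : ℝ → ℝ → ℝ := fun x t => φ x t - φ' x t with hu_eq
  set v : ℝ → ℝ → ℝ := fun x t => ψ x t - ψ' x t with hv_eq
  set w : ℝ → ℝ → ℝ := fun x t => θ x t - θ' x t with hw_eq
  set q : ℝ → ℝ → ℝ := fun x t => P x t - P' x t with hq_eq
  have hu : Sm u := hφ.sub hφ'
  have hv : Sm v := hψ.sub hψ'
  have hw : Sm w := hθ.sub hθ'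
  have hq : Sm q := hP.sub hP'
  -- partial derivatives of differences
  have e_ut : pdt u = fun x t => pdt φ x t - pdt φ' x t := pdt_sub hφ hφ'
  have e_utt : pdt (pdt u) = fun x t => pdt (pdt φ) x t - pdt (pdt φ') x t := by
    rw [e_ut]; exact pdt_sub hφ.pdt_sm hφ'.pdt_sm
  have e_ux : pdx u = fun x t => pdx φ x t - pdx φ' x t := pdx_sub hφ hφ'
  have e_uxx : pdx (pdx u) = fun x t => pdx (pdx φ) x t - pdx (pdx φ') x t := by
    rw [e_ux]; exact pdx_sub hφ.pdx_sm hφ'.pdx_sm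
  have e_uttx : pdx (pdt (pdt u))
      = fun x t => pdx (pdt (pdt φ)) x t - pdx (pdt (pdt φ')) x t := by
    rw [e_utt]; exact pdx_sub hφ.pdt_sm.pdt_sm hφ'.pdt_sm.pdt_sm
  have e_vt : pdt v = fun x t => pdt ψ x t - pdt ψ' x t := pdt_sub hψ hψ'
  have e_vx : pdx v = fun x t => pdx ψ x t - pdx ψ' x t := pdx_sub hψ hψ'
  have e_vxx : pdx (pdx v) = fun x t => pdx (pdx ψ) x t - pdx (pdx ψ') x t := by
    rw [e_vx]; exact pdx_sub hψ.pdx_sm hψ'.pdx_sm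
  have e_vtx : pdx (pdt v) = fun x t => pdx (pdt ψ) x t - pdx (pdt ψ') x t := by
    rw [e_vt]; exact pdx_sub hψ.pdt_sm hψ'.pdt_sm
  have e_wt : pdt w = fun x t => pdt θ x t - pdt θ' x t := pdt_sub hθ hθ'
  have e_wx : pdx w = fun x t => pdx θ x t - pdx θ' x t := pdx_sub hθ hθ'
  have e_wxx : pdx (pdx w) = fun x t => pdx (pdx θ) x t - pdx (pdx θ') x t := by
    rw [e_wx]; exact pdx_sub hθ.pdx_sm hθ'.pdx_sm
  have e_qt : pdt q = fun x t => pdt P x t - pdt P' x t := pdt_sub hP hP'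
  have e_qx : pdx q = fun x t => pdx P x t - pdx P' x t := pdx_sub hP hP'
  have e_qxx : pdx (pdx q) = fun x t => pdx (pdx P) x t - pdx (pdx P') x t := by
    rw [e_qx]; exact pdx_sub hP.pdx_sm hP'.pdx_sm
  -- equations for the differences
  have heq1 : ∀ x ∈ Set.Ioo (0:ℝ) L, ∀ t > (0:ℝ),
      ρ1 * pdt (pdt u) x t = κ * (pdx (pdx u) x t + pdx v x t) := by
    intro x hx t ht
    have E1 := (heq x hx t ht).1
    have E1' := (heq' x hx t ht).1
    rw [pdx_add hφ.pdx_sm hψ x t] at E1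
    rw [pdx_add hφ'.pdx_sm hψ' x t] at E1'
    simp only [e_utt, e_uxx, e_vx]
    ring_nf
    ring_nf at E1 E1'
    linarith
  have heq2 : ∀ x ∈ Set.Ioo (0:ℝ) L, ∀ t > (0:ℝ),
      ρ2 * pdx (pdt (pdt u)) x t + α * pdx (pdx v) x t
        = κ * (pdx u x t + v x t) - ξ1 * pdx w x t - ξ2 * pdx q x t := by
    intro x hx t ht
    have E2 := (heq x hx t ht).2.1
    have E2' := (heq' x hx t ht).2.1
    simp only [e_uttx, e_vxx, e_ux, e_wx, e_qx]
    simp only [hv_eq]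
    ring_nf
    ring_nf at E2 E2'
    linarith
  have heq3 : ∀ x ∈ Set.Ioo (0:ℝ) L, ∀ t > (0:ℝ),
      c * pdt w x t + d * pdt q x t = κ * pdx (pdx w) x t + ξ1 * pdx (pdt v) x t := by
    intro x hx t ht
    have E3 := (heq x hx t ht).2.2.1
    have E3' := (heq' x hx t ht).2.2.1
    simp only [e_wt, e_qt, e_wxx, e_vtx]
    ring_nf
    ring_nf at E3 E3'
    linarith
  have heq4 : ∀ x ∈ Set.Ioo (0:ℝ) L, ∀ t > (0:ℝ),
      d * pdt w x t + r * pdt q x t = h * pdx (pdx q) x t + ξ2 * pdx (pdt v) x t := by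
    intro x hx t ht
    have E4 := (heq x hx t ht).2.2.2
    have E4' := (heq' x hx t ht).2.2.2
    simp only [e_wt, e_qt, e_qxx, e_vtx]
    ring_nf
    ring_nf at E4 E4'
    linarith
  -- boundary conditions for the differences
  have hbc : ∀ t ≥ (0:ℝ), u 0 t = 0 ∧ u L t = 0 ∧ v 0 t = 0 ∧ v L t = 0 ∧
      w 0 t = 0 ∧ w L t = 0 ∧ q 0 t = 0 ∧ q L t = 0 := by
    intro t ht
    obtain ⟨b1, b2, b3, b4, b5, b6, b7, b8⟩ := hb t ht
    obtain ⟨c1, c2, c3, c4, c5, c6, c7, c8⟩ := hb' t ht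
    refine ⟨?_, ?_, ?_, ?_, ?_, ?_, ?_, ?_⟩ <;>
      simp only [hu_eq, hv_eq, hw_eq, hq_eq] <;>
      simp [b1, b2, b3, b4, b5, b6, b7, b8, c1, c2, c3, c4, c5, c6, c7, c8]
  -- initial conditions for the differences
  have hini : ∀ x ∈ Set.Icc (0:ℝ) L, u x 0 = 0 ∧ pdt u x 0 = 0 ∧ pdt (pdt u) x 0 = 0 ∧
      v x 0 = 0 ∧ pdt v x 0 = 0 ∧ w x 0 = 0 ∧ q x 0 = 0 := by
    intro x hx
    obtain ⟨i1, i2, i3, i4, i5, i6, i7⟩ := hinit x hx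
    refine ⟨?_, ?_, ?_, ?_, ?_, ?_, ?_⟩
    · simp [hu_eq, i1]
    · rw [e_ut]; simp [i2]
    · rw [e_utt]; simp [i3]
    · simp [hv_eq, i4]
    · rw [e_vt]; simp [i5]
    · simp [hw_eq, i6]
    · simp [hq_eq, i7]
  have hz := zero_sol L ρ1 ρ2 κ α ξ1 ξ2 c r h d hL hρ1 hρ2 hκ hα hξ1 hξ2 hc hr hh hcrd
    u v w q hu hv hw hq heq1 heq2 heq3 heq4 hbc hini
  intro x hx t ht
  obtain ⟨z1, z2, z3, z4⟩ := hz x hx t ht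
  rw [hu_eq] at z1
  rw [hv_eq] at z2
  rw [hw_eq] at z3
  rw [hq_eq] at z4
  exact ⟨sub_eq_zero.mp z1, sub_eq_zero.mp z2, sub_eq_zero.mp z3, sub_eq_zero.mp z4⟩
end
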